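/- arXiv:2303.16419 — 4 statements merged into one kernel-verified Lean document; each statement's English description precedes it below -/
import Mathlib

section
/- The forgetful functor U from the category Cf of strict globular ω-categories to the category Qf of globular ω-sets admits a left adjoint F, the free strict globular ω-category functor: for every globular ω-set Q there is a morphism of globular ω-sets η_Q : Q → U(F(Q)) such that for every morphism of globular ω-sets φ : Q → U(Ĉ) into the underlying globular ω-set of a strict globular ω-category Ĉ there exists a unique ω-functor φ̂ : F(Q) → Ĉ with φ = U(φ̂) ∘ η_Q. -/
open CategoryTheory CategoryTheory.Limits

/-- A globular ω-set: a sequence of sets with source and target maps satisfying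
the globularity conditions. -/
structure GlobSet : Type 1 where
  cells : ℕ → Type
  src : ∀ n, cells (n + 1) → cells n
  tgt : ∀ n, cells (n + 1) → cells n
  glob_ss : ∀ n (x : cells (n + 2)), src n (src (n + 1) x) = src n (tgt (n + 1) x)
  glob_tt : ∀ n (x : cells (n + 2)), tgt n (src (n + 1) x) = tgt n (tgt (n + 1) x)

/-- A (covariant) morphism of globular ω-sets. -/
structure GlobHom (Q R : GlobSet) : Type where
  app : ∀ n, Q.cells n → R.cells n
  app_src : ∀ n x, R.src n (app (n + 1) x) = app n (Q.src n x)
  app_tgt : ∀ n x, R.tgt n (app (n + 1) x) = app n (Q.tgt n x)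

theorem GlobHom.hext {Q R : GlobSet} {f g : GlobHom Q R}
    (h : ∀ n x, f.app n x = g.app n x) : f = g := by
  obtain ⟨fa, _, _⟩ := f
  obtain ⟨ga, _, _⟩ := g
  have : fa = ga := funext fun n => funext fun x => h n x
  subst this
  rfl

/-- The category `Qf` of globular ω-sets. -/
instance : Category GlobSet where
  Hom := GlobHom
  id Q := ⟨fun _ x => x, fun _ _ => rfl, fun _ _ => rfl⟩
  comp f g := ⟨fun n x => g.app n (f.app n x),
    fun n x => by rw [g.app_src, f.app_src],
    fun n x => by rw [g.app_tgt, f.app_tgt]⟩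
  id_comp f := GlobHom.hext fun _ _ => rfl
  comp_id f := GlobHom.hext fun _ _ => rfl
  assoc f g h := GlobHom.hext fun _ _ => rfl

@[simp] theorem GlobHom.comp_app {Q R S : GlobSet} (f : Q ⟶ R) (g : R ⟶ S) (n x) :
    (f ≫ g).app n x = g.app n (f.app n x) := rfl

@[simp] theorem GlobHom.id_app (Q : GlobSet) (n x) : (𝟙 Q : Q ⟶ Q).app n x = x := rfl

theorem GlobHom.congr_app {Q R : GlobSet} {f g : Q ⟶ R} (h : f = g) (n x) :
    f.app n x = g.app n x := by rw [h]

/-- Parallel cells in a globular ω-set. -/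
def GlobSet.Parallel (Q : GlobSet) : ∀ n, Q.cells n → Q.cells n → Prop
  | 0, _, _ => True
  | n + 1, x, y => Q.src n x = Q.src n y ∧ Q.tgt n x = Q.tgt n y

theorem GlobHom.parallel_map {Q R : GlobSet} (φ : Q ⟶ R) :
    ∀ {n} {x y : Q.cells n}, Q.Parallel n x y → R.Parallel n (φ.app n x) (φ.app n y) := by
  intro n x y h
  cases n with
  | zero => trivial
  | succ n =>
    exact ⟨by rw [φ.app_src, φ.app_src, h.1], by rw [φ.app_tgt, φ.app_tgt, h.2]⟩

/-- A (Leinster) contraction on a morphism `π : Q ⟶ R` of globular ω-sets. -/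
structure Contraction {Q R : GlobSet} (π : Q ⟶ R) where
  κ : ∀ n (xp xm : Q.cells n) (y : R.cells (n + 1)),
      Q.Parallel n xp xm → R.src n y = π.app n xm → R.tgt n y = π.app n xp → Q.cells (n + 1)
  κ_src : ∀ n xp xm y hp hs ht, Q.src n (κ n xp xm y hp hs ht) = xm
  κ_tgt : ∀ n xp xm y hp hs ht, Q.tgt n (κ n xp xm y hp hs ht) = xp
  κ_π : ∀ n xp xm y hp hs ht, π.app (n + 1) (κ n xp xm y hp hs ht) = y

/-- A terminal globular ω-set `•`. -/
def GlobSet.pt : GlobSet where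
  cells _ := PUnit
  src _ _ := PUnit.unit
  tgt _ _ := PUnit.unit
  glob_ss _ _ := rfl
  glob_tt _ _ := rfl

/-- The terminal morphism to `•`. -/
def GlobSet.toPt (Q : GlobSet) : Q ⟶ GlobSet.pt :=
  ⟨fun _ _ => PUnit.unit, fun _ _ => rfl, fun _ _ => rfl⟩

theorem GlobSet.hom_pt_ext {Q : GlobSet} (f g : Q ⟶ GlobSet.pt) : f = g :=
  GlobHom.hext fun _ _ => rfl

/-- The empty globular ω-set. -/
def GlobSet.empty : GlobSet where
  cells _ := PEmpty
  src _ x := x.elim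
  tgt _ x := x.elim
  glob_ss _ x := x.elim
  glob_tt _ x := x.elim

/-- The levelwise fibered product of a cospan of globular ω-sets. -/
def GlobSet.pb {Q R X : GlobSet} (φ : Q ⟶ X) (ψ : R ⟶ X) : GlobSet where
  cells n := { p : Q.cells n × R.cells n // φ.app n p.1 = ψ.app n p.2 }
  src n x := ⟨(Q.src n x.1.1, R.src n x.1.2), by rw [← φ.app_src, ← ψ.app_src, x.2]⟩
  tgt n x := ⟨(Q.tgt n x.1.1, R.tgt n x.1.2), by rw [← φ.app_tgt, ← ψ.app_tgt, x.2]⟩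
  glob_ss n x := Subtype.ext (by
    show (Q.src n (Q.src (n+1) x.1.1), R.src n (R.src (n+1) x.1.2))
        = (Q.src n (Q.tgt (n+1) x.1.1), R.src n (R.tgt (n+1) x.1.2))
    rw [Q.glob_ss, R.glob_ss])
  glob_tt n x := Subtype.ext (by
    show (Q.tgt n (Q.src (n+1) x.1.1), R.tgt n (R.src (n+1) x.1.2))
        = (Q.tgt n (Q.tgt (n+1) x.1.1), R.tgt n (R.tgt (n+1) x.1.2))
    rw [Q.glob_tt, R.glob_tt])

/-- First projection of the levelwise fibered product. -/
def GlobSet.pbFst {Q R X : GlobSet} (φ : Q ⟶ X) (ψ : R ⟶ X) : GlobSet.pb φ ψ ⟶ Q :=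
  ⟨fun _ x => x.1.1, fun _ _ => rfl, fun _ _ => rfl⟩

/-- Second projection of the levelwise fibered product. -/
def GlobSet.pbSnd {Q R X : GlobSet} (φ : Q ⟶ X) (ψ : R ⟶ X) : GlobSet.pb φ ψ ⟶ R :=
  ⟨fun _ x => x.1.2, fun _ _ => rfl, fun _ _ => rfl⟩
/-- Iterated source map. -/
def GlobSet.srcIter (Q : GlobSet) : ∀ (k : ℕ) {n : ℕ}, Q.cells (n + k) → Q.cells n
  | 0, _, x => x
  | k + 1, n, x => Q.srcIter k (Q.src (n + k) x)

/-- Iterated target map. -/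
def GlobSet.tgtIter (Q : GlobSet) : ∀ (k : ℕ) {n : ℕ}, Q.cells (n + k) → Q.cells n
  | 0, _, x => x
  | k + 1, n, x => Q.tgtIter k (Q.tgt (n + k) x)

/-- Iterated identity map. -/
def iterId (cells : ℕ → Type) (id' : ∀ n, cells n → cells (n + 1)) :
    ∀ (k : ℕ) {n : ℕ}, cells n → cells (n + k)
  | 0, _, x => x
  | k + 1, n, x => id' (n + k) (iterId cells id' k x)

/-- Transport of cells along an equality of levels. -/
def GlobSet.castCell (Q : GlobSet) {m m' : ℕ} (h : m = m') : Q.cells m → Q.cells m' :=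
  fun x => h ▸ x

theorem GlobHom.app_srcIter {Q R : GlobSet} (φ : GlobHom Q R) (k : ℕ) :
    ∀ {n : ℕ} (x : Q.cells (n + k)), φ.app n (Q.srcIter k x) = R.srcIter k (φ.app (n + k) x) := by
  induction k with
  | zero => intro n x; rfl
  | succ k ih =>
    intro n x
    show φ.app n (Q.srcIter k (Q.src (n + k) x)) = R.srcIter k (R.src (n + k) (φ.app (n + k + 1) x))
    rw [ih, ← φ.app_src]

theorem GlobHom.app_tgtIter {Q R : GlobSet} (φ : GlobHom Q R) (k : ℕ) :
    ∀ {n : ℕ} (x : Q.cells (n + k)), φ.app n (Q.tgtIter k x) = R.tgtIter k (φ.app (n + k) x) := by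
  induction k with
  | zero => intro n x; rfl
  | succ k ih =>
    intro n x
    show φ.app n (Q.tgtIter k (Q.tgt (n + k) x)) = R.tgtIter k (R.tgt (n + k) (φ.app (n + k + 1) x))
    rw [ih, ← φ.app_tgt]

/-- A strict globular ω-category: a globular ω-set with identities `id'` and partial
compositions `comp p k` (composition `∘^m_p` with `m = p + (k+1)`) satisfying compatibility
with sources/targets, associativity, unitality, functoriality of identities and binary
exchange.  In `comp p k x' x h` the pair `(x', x)` satisfies the composability condition
`h : srcIter x' = tgtIter x` (i.e. the iterated `p`-source of `x'` equals the iterated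
`p`-target of `x`), and the composite means `x' ∘^m_p x`. -/
structure StrictOmegaCat extends GlobSet where
  id' : ∀ n, toGlobSet.cells n → toGlobSet.cells (n + 1)
  id_src : ∀ n x, toGlobSet.src n (id' n x) = x
  id_tgt : ∀ n x, toGlobSet.tgt n (id' n x) = x
  comp : ∀ (p k : ℕ) (x' x : toGlobSet.cells (p + (k + 1))),
      toGlobSet.srcIter (k + 1) x' = toGlobSet.tgtIter (k + 1) x → toGlobSet.cells (p + (k + 1))
  comp_src_zero : ∀ p (x' x : toGlobSet.cells (p + 1))
      (h : toGlobSet.srcIter 1 x' = toGlobSet.tgtIter 1 x),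
      toGlobSet.src p (comp p 0 x' x h) = toGlobSet.src p x
  comp_tgt_zero : ∀ p (x' x : toGlobSet.cells (p + 1))
      (h : toGlobSet.srcIter 1 x' = toGlobSet.tgtIter 1 x),
      toGlobSet.tgt p (comp p 0 x' x h) = toGlobSet.tgt p x'
  comp_src_succ : ∀ p k (x' x : toGlobSet.cells (p + (k + 2)))
      (h : toGlobSet.srcIter (k + 2) x' = toGlobSet.tgtIter (k + 2) x)
      (h' : toGlobSet.srcIter (k + 1) (toGlobSet.src (p + (k + 1)) x')
          = toGlobSet.tgtIter (k + 1) (toGlobSet.src (p + (k + 1)) x)),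
      toGlobSet.src (p + (k + 1)) (comp p (k + 1) x' x h)
        = comp p k (toGlobSet.src (p + (k + 1)) x') (toGlobSet.src (p + (k + 1)) x) h'
  comp_tgt_succ : ∀ p k (x' x : toGlobSet.cells (p + (k + 2)))
      (h : toGlobSet.srcIter (k + 2) x' = toGlobSet.tgtIter (k + 2) x)
      (h' : toGlobSet.srcIter (k + 1) (toGlobSet.tgt (p + (k + 1)) x')
          = toGlobSet.tgtIter (k + 1) (toGlobSet.tgt (p + (k + 1)) x)),
      toGlobSet.tgt (p + (k + 1)) (comp p (k + 1) x' x h)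
        = comp p k (toGlobSet.tgt (p + (k + 1)) x') (toGlobSet.tgt (p + (k + 1)) x) h'
  comp_assoc : ∀ p k (z y x : toGlobSet.cells (p + (k + 1)))
      (hzy : toGlobSet.srcIter (k + 1) z = toGlobSet.tgtIter (k + 1) y)
      (hyx : toGlobSet.srcIter (k + 1) y = toGlobSet.tgtIter (k + 1) x)
      (hl : toGlobSet.srcIter (k + 1) (comp p k z y hzy) = toGlobSet.tgtIter (k + 1) x)
      (hr : toGlobSet.srcIter (k + 1) z = toGlobSet.tgtIter (k + 1) (comp p k y x hyx)),
      comp p k (comp p k z y hzy) x hl = comp p k z (comp p k y x hyx) hr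
  comp_unit_left : ∀ p k (x : toGlobSet.cells (p + (k + 1)))
      (h : toGlobSet.srcIter (k + 1)
            (iterId toGlobSet.cells id' (k + 1) (toGlobSet.tgtIter (k + 1) x))
          = toGlobSet.tgtIter (k + 1) x),
      comp p k (iterId toGlobSet.cells id' (k + 1) (toGlobSet.tgtIter (k + 1) x)) x h = x
  comp_unit_right : ∀ p k (x : toGlobSet.cells (p + (k + 1)))
      (h : toGlobSet.srcIter (k + 1) x
          = toGlobSet.tgtIter (k + 1)
              (iterId toGlobSet.cells id' (k + 1) (toGlobSet.srcIter (k + 1) x))),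
      comp p k x (iterId toGlobSet.cells id' (k + 1) (toGlobSet.srcIter (k + 1) x)) h = x
  id_comp' : ∀ p k (x' x : toGlobSet.cells (p + (k + 1)))
      (h : toGlobSet.srcIter (k + 1) x' = toGlobSet.tgtIter (k + 1) x)
      (h' : toGlobSet.srcIter (k + 2) (id' (p + (k + 1)) x')
          = toGlobSet.tgtIter (k + 2) (id' (p + (k + 1)) x)),
      id' (p + (k + 1)) (comp p k x' x h)
        = comp p (k + 1) (id' (p + (k + 1)) x') (id' (p + (k + 1)) x) h'
  exchange : ∀ (q d k j : ℕ) (he : (q + (d + 1)) + (k + 1) = q + (j + 1))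
      (y' y x' x : toGlobSet.cells ((q + (d + 1)) + (k + 1)))
      (h₁ : toGlobSet.srcIter (k + 1) y' = toGlobSet.tgtIter (k + 1) y)
      (h₂ : toGlobSet.srcIter (k + 1) x' = toGlobSet.tgtIter (k + 1) x)
      (h₃ : toGlobSet.srcIter (j + 1) (toGlobSet.castCell he (comp (q + (d + 1)) k y' y h₁))
          = toGlobSet.tgtIter (j + 1) (toGlobSet.castCell he (comp (q + (d + 1)) k x' x h₂)))
      (h₄ : toGlobSet.srcIter (j + 1) (toGlobSet.castCell he y')
          = toGlobSet.tgtIter (j + 1) (toGlobSet.castCell he x'))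
      (h₅ : toGlobSet.srcIter (j + 1) (toGlobSet.castCell he y)
          = toGlobSet.tgtIter (j + 1) (toGlobSet.castCell he x))
      (h₆ : toGlobSet.srcIter (k + 1)
              (toGlobSet.castCell he.symm (comp q j (toGlobSet.castCell he y') (toGlobSet.castCell he x') h₄))
          = toGlobSet.tgtIter (k + 1)
              (toGlobSet.castCell he.symm (comp q j (toGlobSet.castCell he y) (toGlobSet.castCell he x) h₅))),
      comp q j (toGlobSet.castCell he (comp (q + (d + 1)) k y' y h₁))
          (toGlobSet.castCell he (comp (q + (d + 1)) k x' x h₂)) h₃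
        = toGlobSet.castCell he (comp (q + (d + 1)) k
            (toGlobSet.castCell he.symm (comp q j (toGlobSet.castCell he y') (toGlobSet.castCell he x') h₄))
            (toGlobSet.castCell he.symm (comp q j (toGlobSet.castCell he y) (toGlobSet.castCell he x) h₅)) h₆)

/-- An ω-functor between strict globular ω-categories. -/
structure StrictFunctor (C D : StrictOmegaCat) where
  toGlobHom : C.toGlobSet ⟶ D.toGlobSet
  map_id : ∀ n x, toGlobHom.app (n + 1) (C.id' n x) = D.id' n (toGlobHom.app n x)
  map_comp : ∀ p k (x' x : C.toGlobSet.cells (p + (k + 1)))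
      (h : C.toGlobSet.srcIter (k + 1) x' = C.toGlobSet.tgtIter (k + 1) x)
      (h' : D.toGlobSet.srcIter (k + 1) (toGlobHom.app (p + (k + 1)) x')
          = D.toGlobSet.tgtIter (k + 1) (toGlobHom.app (p + (k + 1)) x)),
      toGlobHom.app (p + (k + 1)) (C.comp p k x' x h)
        = D.comp p k (toGlobHom.app (p + (k + 1)) x') (toGlobHom.app (p + (k + 1)) x) h'

theorem StrictFunctor.hext {C D : StrictOmegaCat} {F G : StrictFunctor C D}
    (h : F.toGlobHom = G.toGlobHom) : F = G := by
  cases F; cases G; cases h; rfl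

/-- The category `Cf` of strict globular ω-categories. -/
instance : CategoryStruct StrictOmegaCat where
  Hom := StrictFunctor
  id C := { toGlobHom := 𝟙 C.toGlobSet, map_id := fun _ _ => rfl,
            map_comp := fun _ _ _ _ _ _ => rfl }
  comp {C D E} F G :=
    { toGlobHom := F.toGlobHom ≫ G.toGlobHom
      map_id := fun n x => by
        show G.toGlobHom.app (n + 1) (F.toGlobHom.app (n + 1) (C.id' n x))
          = E.id' n (G.toGlobHom.app n (F.toGlobHom.app n x))
        rw [F.map_id, G.map_id]
      map_comp := fun p k x' x h h' => by
        have hD : D.toGlobSet.srcIter (k + 1) (F.toGlobHom.app (p + (k + 1)) x')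
            = D.toGlobSet.tgtIter (k + 1) (F.toGlobHom.app (p + (k + 1)) x) := by
          rw [← GlobHom.app_srcIter, ← GlobHom.app_tgtIter, h]
        show G.toGlobHom.app (p + (k + 1)) (F.toGlobHom.app (p + (k + 1)) (C.comp p k x' x h))
          = E.comp p k (G.toGlobHom.app (p + (k + 1)) (F.toGlobHom.app (p + (k + 1)) x'))
              (G.toGlobHom.app (p + (k + 1)) (F.toGlobHom.app (p + (k + 1)) x)) h'
        rw [F.map_comp p k x' x h hD, G.map_comp p k _ _ hD] }

instance : Category StrictOmegaCat where
  id_comp F := StrictFunctor.hext (by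
    show 𝟙 _ ≫ F.toGlobHom = F.toGlobHom
    simp)
  comp_id F := StrictFunctor.hext (by
    show F.toGlobHom ≫ 𝟙 _ = F.toGlobHom
    simp)
  assoc F G H := StrictFunctor.hext (by
    show (F.toGlobHom ≫ G.toGlobHom) ≫ H.toGlobHom = F.toGlobHom ≫ (G.toGlobHom ≫ H.toGlobHom)
    simp)

/-- The forgetful functor `U : Cf ⥤ Qf`. -/
def forgetStrict : StrictOmegaCat ⥤ GlobSet where
  obj C := C.toGlobSet
  map F := F.toGlobHom
  map_id _ := rfl
  map_comp _ _ := rfl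

/-!
Cells of the free strict ω-category on `Q` are formal terms built from the cells of `Q` by
sources, targets, identities and compositions, identified when they evaluate to the same cell
under every morphism `Q ⟶ U C` into every strict ω-category `C`, and restricted to the terms
that are defined (all their composites composable) under every such evaluation. Quantifying over
all `C` only produces a proposition, so these cells still form a small type. Each axiom of a
strict ω-category holds for the free one because it holds after every evaluation; the lift of
`φ : Q ⟶ U C` is evaluation at `φ`, and it is unique because the cells are generated by `Q`.
-/

theorem GlobHom.map_composable {Q R : GlobSet} (f : Q ⟶ R) (k : ℕ) {n : ℕ}
    {x y : Q.cells (n + k)} (h : Q.srcIter k x = Q.tgtIter k y) :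
    R.srcIter k (f.app (n + k) x) = R.tgtIter k (f.app (n + k) y) := by
  rw [← f.app_srcIter, ← f.app_tgtIter, h]

theorem GlobHom.app_castCell {Q R : GlobSet} (f : Q ⟶ R) {m m' : ℕ} (h : m = m')
    (x : Q.cells m) : f.app m' (Q.castCell h x) = R.castCell h (f.app m x) := by
  subst h; rfl

theorem map_iterId {A B : ℕ → Type} {idA : ∀ n, A n → A (n + 1)}
    {idB : ∀ n, B n → B (n + 1)} (f : ∀ n, A n → B n)
    (hf : ∀ n x, f (n + 1) (idA n x) = idB n (f n x)) (k : ℕ) {n : ℕ} (x : A n) :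
    f (n + k) (iterId A idA k x) = iterId B idB k (f n x) := by
  induction k with
  | zero => rfl
  | succ k ih => exact (hf _ _).trans (congrArg (idB _) ih)

theorem StrictOmegaCat.comp_congr (C : StrictOmegaCat) {p k : ℕ}
    {x x' y y' : C.cells (p + (k + 1))} {h : C.srcIter (k + 1) x = C.tgtIter (k + 1) y}
    {h' : C.srcIter (k + 1) x' = C.tgtIter (k + 1) y'} (hx : x = x') (hy : y = y') :
    C.comp p k x y h = C.comp p k x' y' h' := by
  subst hx hy; rfl

namespace FreeOmegaCat

variable {Q : GlobSet} {C : StrictOmegaCat} {φ : Q ⟶ C.toGlobSet}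

inductive Term (Q : GlobSet) : ℕ → Type
  | gen {n : ℕ} : Q.cells n → Term Q n
  | src {n : ℕ} : Term Q (n + 1) → Term Q n
  | tgt {n : ℕ} : Term Q (n + 1) → Term Q n
  | id {n : ℕ} : Term Q n → Term Q (n + 1)
  | comp (p k : ℕ) : Term Q (p + (k + 1)) → Term Q (p + (k + 1)) → Term Q (p + (k + 1))

open Classical in
noncomputable def Term.eval (C : StrictOmegaCat) (φ : Q ⟶ C.toGlobSet) :
    ∀ {n : ℕ}, Term Q n → Option (C.cells n)
  | _, .gen x => some (φ.app _ x)
  | _, .src a => (a.eval C φ).map (C.src _)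
  | _, .tgt a => (a.eval C φ).map (C.tgt _)
  | _, .id a => (a.eval C φ).map (C.id' _)
  | _, .comp p k a b => (a.eval C φ).bind fun c => (b.eval C φ).bind fun d =>
      if h : C.srcIter (k + 1) c = C.tgtIter (k + 1) d then some (C.comp p k c d h) else none

theorem Term.eval_comp {p k : ℕ} {a b : Term Q (p + (k + 1))} {c d : C.cells (p + (k + 1))}
    (ha : a.eval C φ = some c) (hb : b.eval C φ = some d)
    (h : C.srcIter (k + 1) c = C.tgtIter (k + 1) d) :
    (Term.comp p k a b).eval C φ = some (C.comp p k c d h) := by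
  simp [Term.eval, ha, hb, h]

theorem Term.exists_of_eval_comp_isSome {p k : ℕ} {a b : Term Q (p + (k + 1))}
    (h : ((Term.comp p k a b).eval C φ).isSome) :
    ∃ c d, a.eval C φ = some c ∧ b.eval C φ = some d ∧
      C.srcIter (k + 1) c = C.tgtIter (k + 1) d := by
  simp only [Term.eval] at h
  cases ha : a.eval C φ <;> cases hb : b.eval C φ <;> simp_all

def Term.setoid (Q : GlobSet) (n : ℕ) : Setoid (Term Q n) where
  r a b := ∀ (C : StrictOmegaCat) (φ : Q ⟶ C.toGlobSet), a.eval C φ = b.eval C φ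
  iseqv := ⟨fun _ _ _ => rfl, fun h C φ => (h C φ).symm,
    fun h h' C φ => (h C φ).trans (h' C φ)⟩

abbrev TermClass (Q : GlobSet) (n : ℕ) : Type := Quotient (Term.setoid Q n)

namespace TermClass

variable {n : ℕ}

noncomputable def eval (C : StrictOmegaCat) (φ : Q ⟶ C.toGlobSet) :
    TermClass Q n → Option (C.cells n) :=
  Quotient.lift (Term.eval C φ) fun _ _ h => h C φ

theorem ext {A B : TermClass Q n} (h : ∀ C φ, A.eval C φ = B.eval C φ) : A = B := by
  induction A using Quotient.ind
  induction B using Quotient.ind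
  exact Quotient.sound h

def src : TermClass Q (n + 1) → TermClass Q n :=
  Quotient.map Term.src fun _ _ h C φ => congrArg (Option.map _) (h C φ)

def tgt : TermClass Q (n + 1) → TermClass Q n :=
  Quotient.map Term.tgt fun _ _ h C φ => congrArg (Option.map _) (h C φ)

def id : TermClass Q n → TermClass Q (n + 1) :=
  Quotient.map Term.id fun _ _ h C φ => congrArg (Option.map _) (h C φ)

def comp (p k : ℕ) : TermClass Q (p + (k + 1)) → TermClass Q (p + (k + 1)) →
    TermClass Q (p + (k + 1)) :=
  Quotient.map₂ (Term.comp p k) fun _ _ ha _ _ hb C φ => by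
    simp only [Term.eval, ha C φ, hb C φ]

@[simp] theorem eval_src (A : TermClass Q (n + 1)) :
    A.src.eval C φ = (A.eval C φ).map (C.src n) :=
  Quotient.inductionOn A fun _ => rfl

@[simp] theorem eval_tgt (A : TermClass Q (n + 1)) :
    A.tgt.eval C φ = (A.eval C φ).map (C.tgt n) :=
  Quotient.inductionOn A fun _ => rfl

@[simp] theorem eval_id (A : TermClass Q n) : A.id.eval C φ = (A.eval C φ).map (C.id' n) :=
  Quotient.inductionOn A fun _ => rfl

theorem eval_comp {p k : ℕ} {A B : TermClass Q (p + (k + 1))} {c d : C.cells (p + (k + 1))}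
    (hA : A.eval C φ = some c) (hB : B.eval C φ = some d)
    (h : C.srcIter (k + 1) c = C.tgtIter (k + 1) d) :
    (comp p k A B).eval C φ = some (C.comp p k c d h) := by
  induction A using Quotient.ind
  induction B using Quotient.ind
  exact Term.eval_comp hA hB h

end TermClass

/-- Definedness is a property of a class, so composition is defined on classes and the
composability hypothesis is only needed to show that the composite is defined. -/
def Cell (Q : GlobSet) (n : ℕ) : Type :=
  {A : TermClass Q n // ∀ (C : StrictOmegaCat) (φ : Q ⟶ C.toGlobSet), (A.eval C φ).isSome}

namespace Cell

variable {n : ℕ}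

noncomputable def eval (C : StrictOmegaCat) (φ : Q ⟶ C.toGlobSet) (X : Cell Q n) :
    C.cells n :=
  (X.1.eval C φ).get (X.2 C φ)

theorem some_eval (X : Cell Q n) : some (X.eval C φ) = X.1.eval C φ := Option.some_get _

theorem eval_eq_of_some {X : Cell Q n} {c : C.cells n} (h : X.1.eval C φ = some c) :
    X.eval C φ = c :=
  Option.some_injective _ ((some_eval X).trans h)

theorem ext {X Y : Cell Q n} (h : ∀ C φ, X.eval C φ = Y.eval C φ) : X = Y :=
  Subtype.ext (TermClass.ext fun C φ => by rw [← some_eval, ← some_eval, h])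

def gen (x : Q.cells n) : Cell Q n := ⟨⟦.gen x⟧, fun _ _ => rfl⟩

def src (X : Cell Q (n + 1)) : Cell Q n := ⟨X.1.src, fun C φ => by simpa using X.2 C φ⟩

def tgt (X : Cell Q (n + 1)) : Cell Q n := ⟨X.1.tgt, fun C φ => by simpa using X.2 C φ⟩

def id (X : Cell Q n) : Cell Q (n + 1) := ⟨X.1.id, fun C φ => by simpa using X.2 C φ⟩

@[simp] theorem eval_src (X : Cell Q (n + 1)) : X.src.eval C φ = C.src n (X.eval C φ) :=
  Option.some_injective _ <| by rw [some_eval]; simp [src, ← some_eval]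

@[simp] theorem eval_tgt (X : Cell Q (n + 1)) : X.tgt.eval C φ = C.tgt n (X.eval C φ) :=
  Option.some_injective _ <| by rw [some_eval]; simp [tgt, ← some_eval]

@[simp] theorem eval_id (X : Cell Q n) : X.id.eval C φ = C.id' n (X.eval C φ) :=
  Option.some_injective _ <| by rw [some_eval]; simp [id, ← some_eval]

end Cell

abbrev globSet (Q : GlobSet) : GlobSet where
  cells := Cell Q
  src _ := Cell.src
  tgt _ := Cell.tgt
  glob_ss _ X := Cell.ext fun C φ => by simp only [Cell.eval_src, Cell.eval_tgt, C.glob_ss]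
  glob_tt _ X := Cell.ext fun C φ => by simp only [Cell.eval_src, Cell.eval_tgt, C.glob_tt]

noncomputable def evalHom (C : StrictOmegaCat) (φ : Q ⟶ C.toGlobSet) :
    globSet Q ⟶ C.toGlobSet where
  app _ := Cell.eval C φ
  app_src _ X := (Cell.eval_src X).symm
  app_tgt _ X := (Cell.eval_tgt X).symm

namespace Cell

def comp (p k : ℕ) (X Y : Cell Q (p + (k + 1)))
    (h : (globSet Q).srcIter (k + 1) X = (globSet Q).tgtIter (k + 1) Y) :
    Cell Q (p + (k + 1)) :=
  ⟨TermClass.comp p k X.1 Y.1, fun C φ => by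
    rw [TermClass.eval_comp (some_eval X).symm (some_eval Y).symm
      ((evalHom C φ).map_composable (k + 1) h)]
    rfl⟩

@[simp] theorem eval_comp {p k : ℕ} (X Y : Cell Q (p + (k + 1)))
    (h : (globSet Q).srcIter (k + 1) X = (globSet Q).tgtIter (k + 1) Y) :
    (comp p k X Y h).eval C φ
      = C.comp p k (X.eval C φ) (Y.eval C φ) ((evalHom C φ).map_composable (k + 1) h) :=
  Option.some_injective _ <| by
    rw [some_eval]
    exact TermClass.eval_comp (some_eval X).symm (some_eval Y).symm _

@[simp] theorem eval_srcIter (k : ℕ) {n : ℕ} (X : Cell Q (n + k)) :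
    ((globSet Q).srcIter k X).eval C φ = C.srcIter k (X.eval C φ) :=
  (evalHom C φ).app_srcIter k X

@[simp] theorem eval_tgtIter (k : ℕ) {n : ℕ} (X : Cell Q (n + k)) :
    ((globSet Q).tgtIter k X).eval C φ = C.tgtIter k (X.eval C φ) :=
  (evalHom C φ).app_tgtIter k X

@[simp] theorem eval_castCell {m m' : ℕ} (h : m = m') (X : Cell Q m) :
    ((globSet Q).castCell h X).eval C φ = C.castCell h (X.eval C φ) :=
  (evalHom C φ).app_castCell h X

@[simp] theorem eval_iterId (k : ℕ) {n : ℕ} (X : Cell Q n) :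
    (iterId (Cell Q) (fun _ => id) k X).eval C φ = iterId C.cells C.id' k (X.eval C φ) :=
  map_iterId (A := Cell Q) (fun _ => eval C φ) (fun _ => eval_id) k X

end Cell

noncomputable def obj (Q : GlobSet) : StrictOmegaCat where
  toGlobSet := globSet Q
  id' _ := Cell.id
  id_src _ X := Cell.ext fun C φ => by simp only [Cell.eval_src, Cell.eval_id, C.id_src]
  id_tgt _ X := Cell.ext fun C φ => by simp only [Cell.eval_tgt, Cell.eval_id, C.id_tgt]
  comp := Cell.comp
  comp_src_zero p X Y h := Cell.ext fun C φ => by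
    simp only [Cell.eval_src, Cell.eval_comp]
    exact C.comp_src_zero ..
  comp_tgt_zero p X Y h := Cell.ext fun C φ => by
    simp only [Cell.eval_tgt, Cell.eval_comp]
    exact C.comp_tgt_zero ..
  comp_src_succ p k X Y h h' := Cell.ext fun C φ => by
    simp only [Cell.eval_src, Cell.eval_comp]
    exact C.comp_src_succ ..
  comp_tgt_succ p k X Y h h' := Cell.ext fun C φ => by
    simp only [Cell.eval_tgt, Cell.eval_comp]
    exact C.comp_tgt_succ ..
  comp_assoc p k Z Y X hZY hYX hl hr := Cell.ext fun C φ => by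
    simp only [Cell.eval_comp]
    exact C.comp_assoc ..
  comp_unit_left p k X h := Cell.ext fun C φ => by
    simp only [Cell.eval_comp, Cell.eval_iterId, Cell.eval_tgtIter]
    exact C.comp_unit_left ..
  comp_unit_right p k X h := Cell.ext fun C φ => by
    simp only [Cell.eval_comp, Cell.eval_iterId, Cell.eval_srcIter]
    exact C.comp_unit_right ..
  id_comp' p k X Y h h' := Cell.ext fun C φ => by
    simp only [Cell.eval_comp, Cell.eval_id]
    exact C.id_comp' ..
  exchange q d k j he Y' Y X' X h₁ h₂ h₃ h₄ h₅ h₆ := Cell.ext fun C φ => by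
    simp only [Cell.eval_comp, Cell.eval_castCell]
    exact C.exchange ..

def unit (Q : GlobSet) : Q ⟶ globSet Q where
  app _ := Cell.gen
  app_src n x := Cell.ext fun _ φ => (Cell.eval_src _).trans (φ.app_src n x)
  app_tgt n x := Cell.ext fun _ φ => (Cell.eval_tgt _).trans (φ.app_tgt n x)

noncomputable def lift (C : StrictOmegaCat) (φ : Q ⟶ forgetStrict.obj C) : obj Q ⟶ C where
  toGlobHom := evalHom C φ
  map_id _ := Cell.eval_id
  map_comp _ _ X Y h _ := Cell.eval_comp X Y h

theorem unit_comp_lift (C : StrictOmegaCat) (φ : Q ⟶ forgetStrict.obj C) :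
    unit Q ≫ forgetStrict.map (lift C φ) = φ :=
  GlobHom.hext fun _ _ => rfl

theorem Cell.induction {motive : ∀ {n : ℕ}, Cell Q n → Prop}
    (gen : ∀ {n} (x : Q.cells n), motive (Cell.gen x))
    (src : ∀ {n} (X : Cell Q (n + 1)), motive X → motive X.src)
    (tgt : ∀ {n} (X : Cell Q (n + 1)), motive X → motive X.tgt)
    (id : ∀ {n} (X : Cell Q n), motive X → motive X.id)
    (comp : ∀ {p k} (X Y : Cell Q (p + (k + 1))) (h), motive X → motive Y →
      motive (Cell.comp p k X Y h))
    {n : ℕ} (X : Cell Q n) : motive X := by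
  obtain ⟨A, hA⟩ := X
  induction A using Quotient.ind with | _ a => ?_
  induction a with
  | gen x => exact gen x
  | src a ih =>
    exact src ⟨⟦a⟧, fun C φ => by simpa [TermClass.eval, Term.eval] using hA C φ⟩ (ih _)
  | tgt a ih =>
    exact tgt ⟨⟦a⟧, fun C φ => by simpa [TermClass.eval, Term.eval] using hA C φ⟩ (ih _)
  | id a ih =>
    exact id ⟨⟦a⟧, fun C φ => by simpa [TermClass.eval, Term.eval] using hA C φ⟩ (ih _)
  | comp p k a b iha ihb =>
    choose c d hc hd hcd using fun C φ => Term.exists_of_eval_comp_isSome (hA C φ)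
    let X : Cell Q (p + (k + 1)) := ⟨⟦a⟧, fun C φ => by simp [TermClass.eval, hc C φ]⟩
    let Y : Cell Q (p + (k + 1)) := ⟨⟦b⟧, fun C φ => by simp [TermClass.eval, hd C φ]⟩
    have hXY : (globSet Q).srcIter (k + 1) X = (globSet Q).tgtIter (k + 1) Y :=
      Cell.ext fun C φ => by
        rw [Cell.eval_srcIter, Cell.eval_tgtIter, Cell.eval_eq_of_some (X := X) (hc C φ),
          Cell.eval_eq_of_some (X := Y) (hd C φ), hcd C φ]
    exact comp X Y hXY (iha _) (ihb _)

theorem hom_ext {C : StrictOmegaCat} {f g : obj Q ⟶ C}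
    (h : unit Q ≫ forgetStrict.map f = unit Q ≫ forgetStrict.map g) : f = g := by
  refine StrictFunctor.hext (GlobHom.hext fun n X => ?_)
  induction X using Cell.induction with
  | gen x => exact GlobHom.congr_app h _ x
  | src X ih =>
    exact (f.toGlobHom.app_src _ X).symm.trans
      ((congrArg (C.src _) ih).trans (g.toGlobHom.app_src _ X))
  | tgt X ih =>
    exact (f.toGlobHom.app_tgt _ X).symm.trans
      ((congrArg (C.tgt _) ih).trans (g.toGlobHom.app_tgt _ X))
  | id X ih => exact (f.map_id _ X).trans ((congrArg (C.id' _) ih).trans (g.map_id _ X).symm)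
  | comp X Y hXY ihX ihY =>
    exact (f.map_comp _ _ X Y hXY (f.toGlobHom.map_composable _ hXY)).trans
      ((C.comp_congr ihX ihY).trans
        (g.map_comp _ _ X Y hXY (g.toGlobHom.map_composable _ hXY)).symm)

noncomputable def homEquiv (Q : GlobSet) (C : StrictOmegaCat) :
    (obj Q ⟶ C) ≃ (Q ⟶ forgetStrict.obj C) where
  toFun f := unit Q ≫ forgetStrict.map f
  invFun := lift C
  left_inv _ := hom_ext (unit_comp_lift C _)
  right_inv := unit_comp_lift C

noncomputable def functor : GlobSet ⥤ StrictOmegaCat :=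
  Adjunction.leftAdjointOfEquiv homEquiv fun _ _ _ _ _ => by
    simp only [homEquiv, Equiv.coe_fn_mk, Functor.map_comp]
    exact (Category.assoc _ _ _).symm

end FreeOmegaCat

/-- The forgetful functor `U : Cf ⥤ Qf` from strict globular ω-categories
to globular ω-sets admits a left adjoint `F`, the free strict globular ω-category functor:
for every globular ω-set `Q` there is a morphism of globular ω-sets `η_Q : Q ⟶ U(F(Q))`
such that for every morphism of globular ω-sets `φ : Q ⟶ U(Ĉ)` into the underlying
globular ω-set of a strict globular ω-category `Ĉ` there exists a unique ω-functor
`φ̂ : F(Q) ⟶ Ĉ` with `φ = U(φ̂) ∘ η_Q`. -/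
theorem free_strict_omega_category :
    ∃ (F : GlobSet ⥤ StrictOmegaCat) (η : ∀ Q : GlobSet, Q ⟶ forgetStrict.obj (F.obj Q)),
      ∀ (Q : GlobSet) (C : StrictOmegaCat) (φ : Q ⟶ forgetStrict.obj C),
        ∃! φhat : F.obj Q ⟶ C, η Q ≫ forgetStrict.map φhat = φ :=
  ⟨FreeOmegaCat.functor, FreeOmegaCat.unit,
    fun Q C φ => (FreeOmegaCat.homEquiv Q C).bijective.existsUnique φ⟩
end

section
/- The unit η : Id_{Qf} ⇒ U ∘ F of the free strict globular ω-category adjunction F ⊣ U is a Cartesian natural transformation: for every morphism φ : Q₁ → Q₂ of globular ω-sets, the naturality square formed by η_{Q₁}, φ, (U∘F)(φ) and η_{Q₂} is a pullback square in Qf. -/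
open CategoryTheory CategoryTheory.Limits

/-!
Every cell of the free strict ω-category `F Q` is generated from the cells `η q` by identities
and compositions. Sending each cell of `Q` to the weight sequence "one generator in every
dimension up to its own" extends to a strict ω-functor from `F Q` into an ω-category of weight
sequences, in which composition adds weights. Once the weights of a composite are those of a
single generator, one factor has no weight above the composition level, and such generated
cells are iterated identities; peeling them off with the unit laws shows that a cell of `F Q₁`
lying over a generator `η a` of `F Q₂` is itself a generator `η q`. Indicator weights show that
`η` is injective, so every naturality square of `η` is a levelwise pullback of sets.
-/

theorem GlobSet.tgtIter_succ_src (Q : GlobSet) (k : ℕ) {n : ℕ} (x : Q.cells (n + (k + 2))) :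
    Q.tgtIter (k + 1) (Q.src (n + (k + 1)) x) = Q.tgtIter (k + 1) (Q.tgt (n + (k + 1)) x) :=
  congrArg (Q.tgtIter k) (Q.glob_tt (n + k) x)

theorem GlobSet.srcIter_succ_tgt (Q : GlobSet) (k : ℕ) {n : ℕ} (x : Q.cells (n + (k + 2))) :
    Q.srcIter (k + 1) (Q.tgt (n + (k + 1)) x) = Q.srcIter (k + 1) (Q.src (n + (k + 1)) x) :=
  congrArg (Q.srcIter k) (Q.glob_ss (n + k) x).symm

theorem GlobSet.isPullback_of_existsUnique {P X Y Z : GlobSet} {fst : P ⟶ X} {snd : P ⟶ Y}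
    {f : X ⟶ Z} {g : Y ⟶ Z} (w : fst ≫ f = snd ≫ g)
    (h : ∀ n (x : X.cells n) (y : Y.cells n), f.app n x = g.app n y →
      ∃! p : P.cells n, fst.app n p = x ∧ snd.app n p = y) :
    IsPullback fst snd f g := by
  refine IsPullback.of_isLimit (PullbackCone.isLimitAux' (PullbackCone.mk fst snd w) fun s => ?_)
  choose lift hlift huniq using fun n t => h n _ _ (GlobHom.congr_app s.condition n t)
  refine ⟨⟨lift, fun n t => huniq n _ _ ⟨?_, ?_⟩, fun n t => huniq n _ _ ⟨?_, ?_⟩⟩,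
    GlobHom.hext fun n t => (hlift n t).1, GlobHom.hext fun n t => (hlift n t).2,
    fun {_} hm₁ hm₂ => GlobHom.hext fun n t =>
      huniq n t _ ⟨GlobHom.congr_app hm₁ n t, GlobHom.congr_app hm₂ n t⟩⟩
  · exact (fst.app_src n _).symm.trans ((congrArg _ (hlift _ t).1).trans (s.fst.app_src n t))
  · exact (snd.app_src n _).symm.trans ((congrArg _ (hlift _ t).2).trans (s.snd.app_src n t))
  · exact (fst.app_tgt n _).symm.trans ((congrArg _ (hlift _ t).1).trans (s.fst.app_tgt n t))
  · exact (snd.app_tgt n _).symm.trans ((congrArg _ (hlift _ t).2).trans (s.snd.app_tgt n t))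

theorem StrictFunctor.map_composable {C D : StrictOmegaCat} (G : StrictFunctor C D) {p k : ℕ}
    {c' c : C.cells (p + (k + 1))} (h : C.srcIter (k + 1) c' = C.tgtIter (k + 1) c) :
    D.srcIter (k + 1) (G.toGlobHom.app _ c') = D.tgtIter (k + 1) (G.toGlobHom.app _ c) := by
  rw [← GlobHom.app_srcIter, ← GlobHom.app_tgtIter, h]

namespace StrictOmegaCat

variable {C : StrictOmegaCat}

theorem srcIter_iterId (k : ℕ) {n : ℕ} (c : C.cells n) :
    C.srcIter k (iterId C.cells C.id' k c) = c := by
  induction k with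
  | zero => rfl
  | succ k ih => exact (congrArg (C.srcIter k) (C.id_src _ _)).trans ih

theorem tgtIter_iterId (k : ℕ) {n : ℕ} (c : C.cells n) :
    C.tgtIter k (iterId C.cells C.id' k c) = c := by
  induction k with
  | zero => rfl
  | succ k ih => exact (congrArg (C.tgtIter k) (C.id_tgt _ _)).trans ih

variable (C) in
inductive IsIterId (p : ℕ) : ∀ n, C.cells n → Prop
  | refl (c : C.cells p) : IsIterId p p c
  | id {n : ℕ} {c : C.cells n} : IsIterId p n c → IsIterId p (n + 1) (C.id' n c)

theorem IsIterId.eq_id {p n : ℕ} (hpn : p ≤ n) {c : C.cells (n + 1)}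
    (hc : C.IsIterId p (n + 1) c) : ∃ c₀, c = C.id' n c₀ ∧ C.IsIterId p n c₀ := by
  cases hc with
  | refl => omega
  | id hc₀ => exact ⟨_, rfl, hc₀⟩

theorem IsIterId.mono {p n : ℕ} {c : C.cells n} (hc : C.IsIterId p n c) {q : ℕ} (hpq : p ≤ q)
    (hqn : q ≤ n) : C.IsIterId q n c := by
  induction hc with
  | refl =>
    obtain rfl : q = p := by omega
    exact .refl _
  | @id n c _ ih =>
    rcases (show q ≤ n ∨ q = n + 1 by omega) with hle | rfl
    · exact .id (ih hle)
    · exact .refl _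

theorem IsIterId.eq_iterId {p : ℕ} :
    ∀ (k : ℕ) {c : C.cells (p + k)}, C.IsIterId p (p + k) c →
      c = iterId C.cells C.id' k (C.tgtIter k c)
  | 0, _, _ => rfl
  | k + 1, _, hc => by
    obtain ⟨c₀, rfl, hc₀⟩ := hc.eq_id (Nat.le_add_right p k)
    change C.id' _ c₀ = C.id' _ (iterId C.cells C.id' k (C.tgtIter k (C.tgt _ (C.id' _ c₀))))
    rw [C.id_tgt, ← hc₀.eq_iterId k]

theorem IsIterId.srcIter_eq_tgtIter {p k : ℕ} {c : C.cells (p + k)}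
    (hc : C.IsIterId p (p + k) c) : C.srcIter k c = C.tgtIter k c := by
  conv_lhs => rw [hc.eq_iterId k]
  exact C.srcIter_iterId k _

theorem IsIterId.comp {p q : ℕ} (hqp : q < p) :
    ∀ (k : ℕ), p < q + (k + 1) → ∀ {c' c : C.cells (q + (k + 1))}
      (h : C.srcIter (k + 1) c' = C.tgtIter (k + 1) c),
      C.IsIterId p _ c' → C.IsIterId p _ c → C.IsIterId p _ (C.comp q k c' c h)
  | 0, hpk, _, _, _, _, _ => by omega
  | k + 1, hpk, _, _, h, hc', hc => by
    obtain ⟨a', rfl, ha'⟩ := hc'.eq_id (n := q + (k + 1)) (by omega)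
    obtain ⟨a, rfl, ha⟩ := hc.eq_id (n := q + (k + 1)) (by omega)
    have h₀ : C.srcIter (k + 1) a' = C.tgtIter (k + 1) a := by
      rw [← C.id_src _ a', ← C.id_tgt _ a]
      exact h
    rw [← C.id_comp' q k a' a h₀ h]
    refine .id ?_
    rcases (show p < q + (k + 1) ∨ p = q + (k + 1) by omega) with hlt | rfl
    · exact IsIterId.comp hqp k hlt h₀ ha' ha
    · exact .refl _

variable (C) in
structure IsSubcategory (P : ∀ n, C.cells n → Prop) : Prop where
  src : ∀ n c, P (n + 1) c → P n (C.src n c)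
  tgt : ∀ n c, P (n + 1) c → P n (C.tgt n c)
  id : ∀ n c, P n c → P (n + 1) (C.id' n c)
  comp : ∀ p k c' c h, P (p + (k + 1)) c' → P (p + (k + 1)) c →
    P (p + (k + 1)) (C.comp p k c' c h)

namespace IsSubcategory

variable {P : ∀ n, C.cells n → Prop} (hP : C.IsSubcategory P)

abbrev toGlobSet : GlobSet where
  cells n := {c : C.cells n // P n c}
  src n c := ⟨C.src n c.1, hP.src n c.1 c.2⟩
  tgt n c := ⟨C.tgt n c.1, hP.tgt n c.1 c.2⟩
  glob_ss n c := Subtype.ext (C.glob_ss n c.1)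
  glob_tt n c := Subtype.ext (C.glob_tt n c.1)

theorem srcIter_val (k : ℕ) {n : ℕ} (c : hP.toGlobSet.cells (n + k)) :
    (hP.toGlobSet.srcIter k c).1 = C.srcIter k c.1 := by
  induction k with
  | zero => rfl
  | succ k ih => exact ih _

theorem tgtIter_val (k : ℕ) {n : ℕ} (c : hP.toGlobSet.cells (n + k)) :
    (hP.toGlobSet.tgtIter k c).1 = C.tgtIter k c.1 := by
  induction k with
  | zero => rfl
  | succ k ih => exact ih _

theorem iterId_val (k : ℕ) {n : ℕ} (c : hP.toGlobSet.cells n) :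
    (iterId hP.toGlobSet.cells (fun n c => ⟨C.id' n c.1, hP.id n c.1 c.2⟩) k c).1
      = iterId C.cells C.id' k c.1 := by
  induction k with
  | zero => rfl
  | succ k ih => exact congrArg (C.id' _) ih

theorem castCell_val {m m' : ℕ} (h : m = m') (c : hP.toGlobSet.cells m) :
    (hP.toGlobSet.castCell h c).1 = C.castCell h c.1 := by
  subst h
  rfl

theorem composable_val {p k : ℕ} {c' c : hP.toGlobSet.cells (p + (k + 1))}
    (h : hP.toGlobSet.srcIter (k + 1) c' = hP.toGlobSet.tgtIter (k + 1) c) :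
    C.srcIter (k + 1) c'.1 = C.tgtIter (k + 1) c.1 := by
  simpa only [hP.srcIter_val, hP.tgtIter_val] using congrArg Subtype.val h

def toStrictOmegaCat : StrictOmegaCat where
  toGlobSet := hP.toGlobSet
  id' n c := ⟨C.id' n c.1, hP.id n c.1 c.2⟩
  id_src n c := Subtype.ext (C.id_src n c.1)
  id_tgt n c := Subtype.ext (C.id_tgt n c.1)
  comp p k c' c h := ⟨C.comp p k c'.1 c.1 (hP.composable_val h), hP.comp p k _ _ _ c'.2 c.2⟩
  comp_src_zero p c' c _ := Subtype.ext (C.comp_src_zero p c'.1 c.1 _)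
  comp_tgt_zero p c' c _ := Subtype.ext (C.comp_tgt_zero p c'.1 c.1 _)
  comp_src_succ p k c' c _ h' :=
    Subtype.ext (C.comp_src_succ p k c'.1 c.1 _ (hP.composable_val h'))
  comp_tgt_succ p k c' c _ h' :=
    Subtype.ext (C.comp_tgt_succ p k c'.1 c.1 _ (hP.composable_val h'))
  comp_assoc p k c'' c' c _ _ hl hr := Subtype.ext
    (C.comp_assoc p k c''.1 c'.1 c.1 _ _ (hP.composable_val hl) (hP.composable_val hr))
  comp_unit_left p k c _ := Subtype.ext <| by
    simp only [hP.iterId_val, hP.tgtIter_val]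
    exact C.comp_unit_left p k c.1 _
  comp_unit_right p k c _ := Subtype.ext <| by
    simp only [hP.iterId_val, hP.srcIter_val]
    exact C.comp_unit_right p k c.1 _
  id_comp' p k c' c _ h' := Subtype.ext (C.id_comp' p k c'.1 c.1 _ (hP.composable_val h'))
  exchange q d k j he y' y x' x _ _ _ _ _ _ := Subtype.ext <| by
    simp only [hP.castCell_val]
    exact C.exchange q d k j he y'.1 y.1 x'.1 x.1 _ _ _ _ _ _

def inclusion : hP.toStrictOmegaCat ⟶ C where
  toGlobHom := ⟨fun _ c => c.1, fun _ _ => rfl, fun _ _ => rfl⟩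
  map_id _ _ := rfl
  map_comp _ _ _ _ _ _ := rfl

theorem forall_of_unit {F : GlobSet ⥤ StrictOmegaCat} (adj : F ⊣ forgetStrict)
    {Q : GlobSet} {P : ∀ n, (F.obj Q).cells n → Prop} (hP : (F.obj Q).IsSubcategory P)
    (hunit : ∀ n q, P n ((adj.unit.app Q).app n q)) (n : ℕ) (c : (F.obj Q).cells n) : P n c := by
  let unitRestrict : Q ⟶ forgetStrict.obj hP.toStrictOmegaCat :=
    ⟨fun n q => ⟨(adj.unit.app Q).app n q, hunit n q⟩,
      fun n q => Subtype.ext ((adj.unit.app Q).app_src n q),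
      fun n q => Subtype.ext ((adj.unit.app Q).app_tgt n q)⟩
  have hretract : (adj.homEquiv _ _).symm unitRestrict ≫ hP.inclusion = 𝟙 (F.obj Q) := by
    apply (adj.homEquiv _ _).injective
    rw [Adjunction.homEquiv_naturality_right, Equiv.apply_symm_apply, Adjunction.homEquiv_id]
    rfl
  have hc : (((adj.homEquiv _ _).symm unitRestrict).toGlobHom.app n c).1 = c :=
    GlobHom.congr_app (congrArg StrictFunctor.toGlobHom hretract) n c
  exact hc ▸ (((adj.homEquiv _ _).symm unitRestrict).toGlobHom.app n c).2

end IsSubcategory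

inductive Generated {Q : GlobSet} (u : Q ⟶ C.toGlobSet) : ∀ n, C.cells n → Prop
  | of (n : ℕ) (q : Q.cells n) : Generated u n (u.app n q)
  | id {n : ℕ} {c : C.cells n} : Generated u n c → Generated u (n + 1) (C.id' n c)
  | comp (p k : ℕ) {c' c : C.cells (p + (k + 1))}
      (h : C.srcIter (k + 1) c' = C.tgtIter (k + 1) c) :
      Generated u (p + (k + 1)) c' → Generated u (p + (k + 1)) c →
      Generated u (p + (k + 1)) (C.comp p k c' c h)

theorem Generated.src_tgt {Q : GlobSet} {u : Q ⟶ C.toGlobSet} {n : ℕ} {c : C.cells n}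
    (hc : Generated u n c) :
    match n, c with
    | 0, _ => True
    | m + 1, c => Generated u m (C.src m c) ∧ Generated u m (C.tgt m c) := by
  induction hc with
  | of n q =>
    cases n with
    | zero => trivial
    | succ m => exact ⟨(u.app_src m q).symm ▸ .of m _, (u.app_tgt m q).symm ▸ .of m _⟩
  | @id n c hc _ => exact ⟨(C.id_src n c).symm ▸ hc, (C.id_tgt n c).symm ▸ hc⟩
  | @comp p k c' c h _ _ ih' ih =>
    cases k with
    | zero =>
      exact ⟨(C.comp_src_zero p _ _ h).symm ▸ ih.1, (C.comp_tgt_zero p _ _ h).symm ▸ ih'.2⟩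
    | succ k =>
      have hs : C.srcIter (k + 1) (C.src _ c') = C.tgtIter (k + 1) (C.src _ c) :=
        h.trans (C.tgtIter_succ_src k c).symm
      have ht : C.srcIter (k + 1) (C.tgt _ c') = C.tgtIter (k + 1) (C.tgt _ c) :=
        (C.srcIter_succ_tgt k c').trans h
      exact ⟨(C.comp_src_succ p k _ _ h hs).symm ▸ .comp p k hs ih'.1 ih.1,
        (C.comp_tgt_succ p k _ _ h ht).symm ▸ .comp p k ht ih'.2 ih.2⟩

theorem Generated.isSubcategory {Q : GlobSet} (u : Q ⟶ C.toGlobSet) :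
    C.IsSubcategory (Generated u) where
  src _ _ hc := hc.src_tgt.1
  tgt _ _ hc := hc.src_tgt.2
  id _ _ := .id
  comp p k _ _ h := .comp p k h

theorem generated_unit {F : GlobSet ⥤ StrictOmegaCat} (adj : F ⊣ forgetStrict) (Q : GlobSet) :
    ∀ n c, Generated (adj.unit.app Q) n c :=
  (Generated.isSubcategory _).forall_of_unit adj (fun n q => .of n q)

end StrictOmegaCat

/-! An `n`-cell of the weight ω-category is a sequence of pairs (source weight, target weight),
one for each level, which is diagonal at level `n` (the weight of the cell itself) and zero
above it. -/

namespace Weight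

def IsCell (n : ℕ) (c : ℕ → ℕ × ℕ) : Prop := (c n).1 = (c n).2 ∧ ∀ i, n < i → c i = 0

def srcCut (n : ℕ) (c : ℕ → ℕ × ℕ) (i : ℕ) : ℕ × ℕ :=
  if i < n then c i else if i = n then ((c i).1, (c i).1) else 0

def tgtCut (n : ℕ) (c : ℕ → ℕ × ℕ) (i : ℕ) : ℕ × ℕ :=
  if i < n then c i else if i = n then ((c i).2, (c i).2) else 0

def glue (p : ℕ) (c' c : ℕ → ℕ × ℕ) (i : ℕ) : ℕ × ℕ :=
  if i < p then c i else if i = p then ((c i).1, (c' i).2) else c' i + c i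

def Composable (p : ℕ) (c' c : ℕ → ℕ × ℕ) : Prop := (∀ i < p, c' i = c i) ∧ (c' p).1 = (c p).2

theorem isCell_srcCut (n : ℕ) (c : ℕ → ℕ × ℕ) : IsCell n (srcCut n c) :=
  ⟨by simp [srcCut], fun i hi => by simp [srcCut, hi.ne', hi.not_gt]⟩

theorem isCell_tgtCut (n : ℕ) (c : ℕ → ℕ × ℕ) : IsCell n (tgtCut n c) :=
  ⟨by simp [tgtCut], fun i hi => by simp [tgtCut, hi.ne', hi.not_gt]⟩

theorem isCell_glue {p k : ℕ} {c' c : ℕ → ℕ × ℕ} (h' : IsCell (p + (k + 1)) c')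
    (h : IsCell (p + (k + 1)) c) : IsCell (p + (k + 1)) (glue p c' c) := by
  refine ⟨?_, fun i hi => ?_⟩
  · simp only [glue, if_neg (show ¬ p + (k + 1) < p by omega),
      if_neg (show p + (k + 1) ≠ p by omega), Prod.fst_add, Prod.snd_add, h.1, h'.1]
  · simp only [glue, if_neg (show ¬ i < p by omega), if_neg (show i ≠ p by omega),
      h'.2 i hi, h.2 i hi, add_zero]

theorem IsCell.succ {n : ℕ} {c : ℕ → ℕ × ℕ} (h : IsCell n c) : IsCell (n + 1) c :=
  ⟨by rw [h.2 _ n.lt_succ_self]; rfl, fun i hi => h.2 i (by omega)⟩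

theorem IsCell.srcCut_eq {n : ℕ} {c : ℕ → ℕ × ℕ} (h : IsCell n c) : srcCut n c = c := by
  funext i
  unfold srcCut
  split_ifs with h₁ h₂
  · rfl
  · subst h₂
    exact Prod.ext rfl h.1
  · exact (h.2 i (by omega)).symm

theorem IsCell.tgtCut_eq {n : ℕ} {c : ℕ → ℕ × ℕ} (h : IsCell n c) : tgtCut n c = c := by
  funext i
  unfold tgtCut
  split_ifs with h₁ h₂
  · rfl
  · subst h₂
    exact Prod.ext h.1.symm rfl
  · exact (h.2 i (by omega)).symm

theorem srcCut_srcCut {n m : ℕ} (h : n ≤ m) (c : ℕ → ℕ × ℕ) :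
    srcCut n (srcCut m c) = srcCut n c := by
  funext i
  simp only [srcCut]
  split_ifs <;> first | rfl | omega

theorem tgtCut_tgtCut {n m : ℕ} (h : n ≤ m) (c : ℕ → ℕ × ℕ) :
    tgtCut n (tgtCut m c) = tgtCut n c := by
  funext i
  simp only [tgtCut]
  split_ifs <;> first | rfl | omega

theorem srcCut_tgtCut {n m : ℕ} (h : n < m) (c : ℕ → ℕ × ℕ) :
    srcCut n (tgtCut m c) = srcCut n c := by
  funext i
  simp only [srcCut, tgtCut]
  split_ifs <;> first | rfl | omega

theorem tgtCut_srcCut {n m : ℕ} (h : n < m) (c : ℕ → ℕ × ℕ) :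
    tgtCut n (srcCut m c) = tgtCut n c := by
  funext i
  simp only [srcCut, tgtCut]
  split_ifs <;> first | rfl | omega

theorem srcCut_glue_self (p : ℕ) (c' c : ℕ → ℕ × ℕ) : srcCut p (glue p c' c) = srcCut p c := by
  funext i
  simp only [srcCut, glue]
  split_ifs <;> rfl

theorem tgtCut_glue_self {p : ℕ} {c' c : ℕ → ℕ × ℕ} (h : ∀ i < p, c' i = c i) :
    tgtCut p (glue p c' c) = tgtCut p c' := by
  funext i
  simp only [tgtCut, glue]
  split_ifs <;> first | rfl | omega | simp_all

theorem srcCut_glue {p m : ℕ} (h : p < m) (c' c : ℕ → ℕ × ℕ) :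
    srcCut m (glue p c' c) = glue p (srcCut m c') (srcCut m c) := by
  funext i
  simp only [srcCut, glue]
  split_ifs <;> first | rfl | omega

theorem tgtCut_glue {p m : ℕ} (h : p < m) (c' c : ℕ → ℕ × ℕ) :
    tgtCut m (glue p c' c) = glue p (tgtCut m c') (tgtCut m c) := by
  funext i
  simp only [tgtCut, glue]
  split_ifs <;> first | rfl | omega

theorem glue_assoc (p : ℕ) (c'' c' c : ℕ → ℕ × ℕ) :
    glue p (glue p c'' c') c = glue p c'' (glue p c' c) := by
  funext i
  simp only [glue]
  split_ifs <;> first | rfl | omega | simp_all [add_assoc]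

theorem glue_tgtCut_self (p : ℕ) (c : ℕ → ℕ × ℕ) : glue p (tgtCut p c) c = c := by
  funext i
  simp only [tgtCut, glue]
  split_ifs <;> first | rfl | omega | simp_all

theorem glue_srcCut_self (p : ℕ) (c : ℕ → ℕ × ℕ) : glue p c (srcCut p c) = c := by
  funext i
  simp only [srcCut, glue]
  split_ifs <;> rfl

theorem glue_glue_comm (q r : ℕ) (y' y x' x : ℕ → ℕ × ℕ) :
    glue q (glue r y' y) (glue r x' x) = glue r (glue q y' x') (glue q y x) := by
  funext i
  simp only [glue]
  split_ifs <;> first | rfl | omega | simp_all [add_add_add_comm]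

abbrev globSet : GlobSet where
  cells n := {c : ℕ → ℕ × ℕ // IsCell n c}
  src n c := ⟨srcCut n c.1, isCell_srcCut n c.1⟩
  tgt n c := ⟨tgtCut n c.1, isCell_tgtCut n c.1⟩
  glob_ss n c := Subtype.ext <| by
    simp only [srcCut_srcCut n.le_succ, srcCut_tgtCut n.lt_succ_self]
  glob_tt n c := Subtype.ext <| by
    simp only [tgtCut_tgtCut n.le_succ, tgtCut_srcCut n.lt_succ_self]

theorem srcIter_val (k : ℕ) {n : ℕ} (c : globSet.cells (n + k)) :
    (globSet.srcIter k c).1 = srcCut n c.1 := by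
  induction k with
  | zero => exact c.2.srcCut_eq.symm
  | succ k ih => exact (ih _).trans (srcCut_srcCut (Nat.le_add_right n k) c.1)

theorem tgtIter_val (k : ℕ) {n : ℕ} (c : globSet.cells (n + k)) :
    (globSet.tgtIter k c).1 = tgtCut n c.1 := by
  induction k with
  | zero => exact c.2.tgtCut_eq.symm
  | succ k ih => exact (ih _).trans (tgtCut_tgtCut (Nat.le_add_right n k) c.1)

theorem iterId_val (k : ℕ) {n : ℕ} (c : globSet.cells n) :
    (iterId globSet.cells (fun _ c => ⟨c.1, c.2.succ⟩) k c).1 = c.1 := by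
  induction k with
  | zero => rfl
  | succ k ih => exact ih

theorem castCell_val {m m' : ℕ} (h : m = m') (c : globSet.cells m) :
    (globSet.castCell h c).1 = c.1 := by
  subst h
  rfl

theorem composable_of_srcIter_eq_tgtIter {p k : ℕ} {c' c : globSet.cells (p + (k + 1))}
    (h : globSet.srcIter (k + 1) c' = globSet.tgtIter (k + 1) c) : Composable p c'.1 c.1 := by
  have h' := congrArg Subtype.val h
  rw [srcIter_val, tgtIter_val] at h'
  exact ⟨fun i hi => by simpa [srcCut, tgtCut, hi] using congrFun h' i,
    by simpa [srcCut, tgtCut] using congrArg Prod.fst (congrFun h' p)⟩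

end Weight

def weightCat : StrictOmegaCat where
  toGlobSet := Weight.globSet
  id' _ c := ⟨c.1, c.2.succ⟩
  id_src _ c := Subtype.ext c.2.srcCut_eq
  id_tgt _ c := Subtype.ext c.2.tgtCut_eq
  comp p _ c' c _ := ⟨Weight.glue p c'.1 c.1, Weight.isCell_glue c'.2 c.2⟩
  comp_src_zero p c' c _ := Subtype.ext (Weight.srcCut_glue_self p c'.1 c.1)
  comp_tgt_zero _ _ _ h :=
    Subtype.ext (Weight.tgtCut_glue_self (Weight.composable_of_srcIter_eq_tgtIter h).1)
  comp_src_succ _ _ c' c _ _ := Subtype.ext (Weight.srcCut_glue (by omega) c'.1 c.1)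
  comp_tgt_succ _ _ c' c _ _ := Subtype.ext (Weight.tgtCut_glue (by omega) c'.1 c.1)
  comp_assoc p _ c'' c' c _ _ _ _ := Subtype.ext (Weight.glue_assoc p c''.1 c'.1 c.1)
  comp_unit_left p k c _ := Subtype.ext <| by
    change Weight.glue p (iterId Weight.globSet.cells (fun _ c => ⟨c.1, c.2.succ⟩) (k + 1)
      (Weight.globSet.tgtIter (k + 1) c)).1 c.1 = c.1
    rw [Weight.iterId_val, Weight.tgtIter_val, Weight.glue_tgtCut_self]
  comp_unit_right p k c _ := Subtype.ext <| by
    change Weight.glue p c.1 (iterId Weight.globSet.cells (fun _ c => ⟨c.1, c.2.succ⟩) (k + 1)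
      (Weight.globSet.srcIter (k + 1) c)).1 = c.1
    rw [Weight.iterId_val, Weight.srcIter_val, Weight.glue_srcCut_self]
  id_comp' _ _ _ _ _ _ := rfl
  exchange q d _ _ _ y' y x' x _ _ _ _ _ _ := Subtype.ext <| by
    simp only [Weight.castCell_val]
    exact Weight.glue_glue_comm q (q + (d + 1)) y'.1 y.1 x'.1 x.1


namespace Weight

def ones (n i : ℕ) : ℕ × ℕ := if i ≤ n then (1, 1) else 0

def VanishesAbove (p : ℕ) (c : ℕ → ℕ × ℕ) : Prop := ∀ i, p < i → c i = 0

/-- The invariant satisfied by the weights of cells generated from cells of weight `ones`. -/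
structure Admissible (c : ℕ → ℕ × ℕ) : Prop where
  fst_eq_snd : ∀ i, (c i).1 = (c i).2
  fst_eq_zero_of_le : ∀ {i j}, i ≤ j → (c i).1 = 0 → (c j).1 = 0

variable {c' c : ℕ → ℕ × ℕ}

theorem Admissible.eq_zero (hc : Admissible c) {i : ℕ} (h : (c i).1 = 0) : c i = 0 :=
  Prod.ext h ((hc.fst_eq_snd i).symm.trans h)

theorem admissible_ones (n : ℕ) : Admissible (ones n) where
  fst_eq_snd i := by
    unfold ones
    split_ifs <;> rfl
  fst_eq_zero_of_le {i j} hij h := by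
    have hi : ¬ i ≤ n := fun hi => by simp [ones, hi] at h
    simp [ones, show ¬ j ≤ n by omega]

theorem Admissible.glue {p : ℕ} (hc' : Admissible c') (hc : Admissible c)
    (h : Composable p c' c) : Admissible (glue p c' c) where
  fst_eq_snd i := by
    unfold Weight.glue
    split_ifs with h₁ h₂
    · exact hc.fst_eq_snd i
    · subst h₂
      exact (hc.fst_eq_snd i).trans (h.2.symm.trans (hc'.fst_eq_snd i))
    · simp only [Prod.fst_add, Prod.snd_add, hc'.fst_eq_snd, hc.fst_eq_snd]
  fst_eq_zero_of_le {i j} hij h0 := by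
    unfold Weight.glue at h0 ⊢
    by_cases hip : i ≤ p
    · have hci : (c i).1 = 0 := by split_ifs at h0 <;> first | exact h0 | omega
      have hc'p : (c' p).1 = 0 :=
        h.2.trans ((hc.fst_eq_snd p).symm.trans (hc.fst_eq_zero_of_le hip hci))
      split_ifs
      · exact hc.fst_eq_zero_of_le hij hci
      · exact hc.fst_eq_zero_of_le hij hci
      · rw [Prod.fst_add, hc'.fst_eq_zero_of_le (by omega) hc'p, hc.fst_eq_zero_of_le hij hci]
    · rw [if_neg (by omega), if_neg (by omega), Prod.fst_add, Nat.add_eq_zero_iff] at h0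
      rw [if_neg (by omega), if_neg (by omega), Prod.fst_add, hc'.fst_eq_zero_of_le hij h0.1,
        hc.fst_eq_zero_of_le hij h0.2]

theorem vanishesAbove_of_glue_of_lt {p q : ℕ} (hqp : q < p) (hv : VanishesAbove p (glue q c' c)) :
    VanishesAbove p c' ∧ VanishesAbove p c := by
  have hsum (i : ℕ) (hi : p < i) : c' i + c i = 0 := by
    simpa only [glue, if_neg (show ¬ i < q by omega), if_neg (show i ≠ q by omega)] using hv i hi
  exact ⟨fun i hi => (add_eq_zero.1 (hsum i hi)).1, fun i hi => (add_eq_zero.1 (hsum i hi)).2⟩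

theorem vanishesAbove_of_glue_of_le {p q : ℕ} (hpq : p ≤ q) (hc' : Admissible c')
    (hc : Admissible c) (h : Composable q c' c) (hv : VanishesAbove p (glue q c' c)) :
    VanishesAbove p c' ∧ VanishesAbove p c := by
  have key (i : ℕ) (hi : p < i) : c' i = 0 ∧ c i = 0 := by
    have hvi := hv i hi
    unfold glue at hvi
    rcases lt_trichotomy i q with hiq | rfl | hiq
    · rw [if_pos hiq] at hvi
      exact ⟨(h.1 i hiq).trans hvi, hvi⟩
    · rw [if_neg (lt_irrefl _), if_pos rfl, Prod.mk_eq_zero] at hvi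
      exact ⟨hc'.eq_zero ((hc'.fst_eq_snd i).trans hvi.2), hc.eq_zero hvi.1⟩
    · rw [if_neg (by omega), if_neg (by omega)] at hvi
      exact add_eq_zero.1 hvi
  exact ⟨fun i hi => (key i hi).1, fun i hi => (key i hi).2⟩

theorem vanishesAbove_of_fst_add_eq_one {p m : ℕ} {a b : ℕ → ℕ × ℕ} (ha : Admissible a)
    (hb : Admissible b) (hsum : ∀ i, p < i → i ≤ m → (a i).1 + (b i).1 = 1) (ham : (a m).1 = 0) :
    VanishesAbove p a := by
  intro i hi
  refine ha.eq_zero ?_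
  by_cases him : i ≤ m
  · by_contra hai
    have hbm := hb.fst_eq_zero_of_le him (by have := hsum i hi him; omega)
    have := hsum m (by omega) le_rfl
    omega
  · exact ha.fst_eq_zero_of_le (by omega) ham

theorem vanishesAbove_of_glue_eq_ones {p m : ℕ} (hpm : p < m) (hc' : Admissible c')
    (hc : Admissible c) (h : glue p c' c = ones m) : VanishesAbove p c ∨ VanishesAbove p c' := by
  have hsum (i : ℕ) (hpi : p < i) (him : i ≤ m) : (c' i).1 + (c i).1 = 1 := by
    simpa only [glue, ones, if_neg (show ¬ i < p by omega), if_neg (show i ≠ p by omega),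
      if_pos him, Prod.fst_add] using congrArg Prod.fst (congrFun h i)
  rcases Nat.eq_zero_or_pos (c m).1 with hcm | hcm
  · exact .inl (vanishesAbove_of_fst_add_eq_one hc hc'
      (fun i hpi him => (Nat.add_comm _ _).trans (hsum i hpi him)) hcm)
  · exact .inr (vanishesAbove_of_fst_add_eq_one hc' hc hsum (by have := hsum m hpm le_rfl; omega))

variable {Q : GlobSet} (w : ∀ n, Q.cells n → ℕ)

/-- At a level `i < n`, the weights of the `i`-dimensional iterated source and target of `q`. -/
def weighSeq : ∀ n, Q.cells n → ℕ → ℕ × ℕ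
  | 0, q, i => if i = 0 then (w 0 q, w 0 q) else 0
  | n + 1, q, i =>
    if i ≤ n then ((weighSeq n (Q.src n q) i).1, (weighSeq n (Q.tgt n q) i).2)
    else if i = n + 1 then (w (n + 1) q, w (n + 1) q) else 0

theorem weighSeq_self : ∀ n (q : Q.cells n), weighSeq w n q n = (w n q, w n q)
  | 0, _ => rfl
  | n + 1, _ => by simp [weighSeq]

theorem isCell_weighSeq : ∀ n (q : Q.cells n), IsCell n (weighSeq w n q)
  | 0, _ => ⟨rfl, fun i hi => by simp [weighSeq, hi.ne']⟩
  | n + 1, _ =>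
    ⟨by simp [weighSeq], fun i hi => by simp [weighSeq, hi.ne', show ¬ i ≤ n by omega]⟩

theorem weighSeq_src_eq_tgt : ∀ n (q : Q.cells (n + 1)) i, i < n →
    weighSeq w n (Q.src n q) i = weighSeq w n (Q.tgt n q) i
  | n + 1, q, i, hi => by
    simp only [weighSeq, if_pos (show i ≤ n by omega), Q.glob_ss, Q.glob_tt]

theorem srcCut_weighSeq (n : ℕ) (q : Q.cells (n + 1)) :
    srcCut n (weighSeq w (n + 1) q) = weighSeq w n (Q.src n q) := by
  funext i
  unfold srcCut
  split_ifs with h₁ h₂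
  · simp only [weighSeq, if_pos h₁.le, weighSeq_src_eq_tgt w n q i h₁]
  · subst h₂
    simp only [weighSeq, le_rfl, if_true, weighSeq_self]
  · exact ((isCell_weighSeq w n _).2 i (by omega)).symm

theorem tgtCut_weighSeq (n : ℕ) (q : Q.cells (n + 1)) :
    tgtCut n (weighSeq w (n + 1) q) = weighSeq w n (Q.tgt n q) := by
  funext i
  unfold tgtCut
  split_ifs with h₁ h₂
  · simp only [weighSeq, if_pos h₁.le, ← weighSeq_src_eq_tgt w n q i h₁]
  · subst h₂
    simp only [weighSeq, le_rfl, if_true, weighSeq_self]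
  · exact ((isCell_weighSeq w n _).2 i (by omega)).symm

theorem weighSeq_one : ∀ n (q : Q.cells n), weighSeq (fun _ _ => 1) n q = ones n
  | 0, _ => by funext i; simp [weighSeq, ones]
  | n + 1, q => by
    funext i
    simp only [weighSeq, weighSeq_one n, ones]
    split_ifs <;> first | rfl | omega

variable (Q) in
def weigh : Q ⟶ weightCat.toGlobSet where
  app n q := ⟨weighSeq w n q, isCell_weighSeq w n q⟩
  app_src n q := Subtype.ext (srcCut_weighSeq w n q)
  app_tgt n q := Subtype.ext (tgtCut_weighSeq w n q)

theorem comp_weigh_one {Q₁ Q₂ : GlobSet} (φ : Q₁ ⟶ Q₂) :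
    φ ≫ weigh Q₂ (fun _ _ => 1) = weigh Q₁ (fun _ _ => 1) :=
  GlobHom.hext fun n q => Subtype.ext <|
    (weighSeq_one n (φ.app n q)).trans (weighSeq_one n q).symm

end Weight

namespace StrictFunctor

variable {C : StrictOmegaCat} (ψ : StrictFunctor C weightCat)

theorem val_app_id {n : ℕ} (c : C.cells n) :
    (ψ.toGlobHom.app (n + 1) (C.id' n c)).1 = (ψ.toGlobHom.app n c).1 :=
  congrArg Subtype.val (ψ.map_id n c)

theorem val_app_comp {p k : ℕ} {c' c : C.cells (p + (k + 1))}
    (h : C.srcIter (k + 1) c' = C.tgtIter (k + 1) c) :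
    (ψ.toGlobHom.app _ (C.comp p k c' c h)).1
      = Weight.glue p (ψ.toGlobHom.app _ c').1 (ψ.toGlobHom.app _ c).1 :=
  congrArg Subtype.val (ψ.map_comp p k c' c h (ψ.map_composable h))

theorem composable_val_app {p k : ℕ} {c' c : C.cells (p + (k + 1))}
    (h : C.srcIter (k + 1) c' = C.tgtIter (k + 1) c) :
    Weight.Composable p (ψ.toGlobHom.app _ c').1 (ψ.toGlobHom.app _ c).1 :=
  Weight.composable_of_srcIter_eq_tgtIter (ψ.map_composable h)

end StrictFunctor

namespace StrictOmegaCat.Generated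

variable {Q : GlobSet} {C : StrictOmegaCat} {u : Q ⟶ C.toGlobSet} {ψ : StrictFunctor C weightCat}

theorem admissible (hψ : ∀ n q, (ψ.toGlobHom.app n (u.app n q)).1 = Weight.ones n)
    {n : ℕ} {c : C.cells n} (hc : Generated u n c) :
    Weight.Admissible (ψ.toGlobHom.app n c).1 := by
  induction hc with
  | of n q => exact hψ n q ▸ Weight.admissible_ones n
  | id _ ih => exact (ψ.val_app_id _).symm ▸ ih
  | comp p k h _ _ ih' ih => exact (ψ.val_app_comp h).symm ▸ ih'.glue ih (ψ.composable_val_app h)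

theorem isIterId_of_vanishesAbove
    (hψ : ∀ n q, (ψ.toGlobHom.app n (u.app n q)).1 = Weight.ones n)
    {n : ℕ} {c : C.cells n} (hc : Generated u n c) {p : ℕ} (hpn : p < n)
    (hv : Weight.VanishesAbove p (ψ.toGlobHom.app n c).1) : C.IsIterId p n c := by
  induction hc generalizing p with
  | of n q =>
    have := hv n hpn
    simp [hψ, Weight.ones] at this
  | @id n c _ ih =>
    rw [ψ.val_app_id] at hv
    rcases (show p < n ∨ p = n by omega) with hlt | rfl
    · exact .id (ih hlt hv)
    · exact .id (.refl _)
  | @comp q k c' c h hc' hc ih' ih =>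
    rw [ψ.val_app_comp] at hv
    rcases lt_or_ge q p with hqp | hpq
    · obtain ⟨hv', hv⟩ := Weight.vanishesAbove_of_glue_of_lt hqp hv
      exact IsIterId.comp hqp k hpn h (ih' hpn hv') (ih hpn hv)
    · obtain ⟨hv', hv⟩ := Weight.vanishesAbove_of_glue_of_le hpq (hc'.admissible hψ)
        (hc.admissible hψ) (ψ.composable_val_app h) hv
      obtain rfl : c = iterId C.cells C.id' (k + 1) (C.srcIter (k + 1) c') :=
        (((ih hpn hv).mono hpq (by omega)).eq_iterId (k + 1)).trans (by rw [h])
      rw [C.comp_unit_right q k c' h]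
      exact ih' hpn hv'

theorem exists_eq_of_val_app_eq_ones
    (hψ : ∀ n q, (ψ.toGlobHom.app n (u.app n q)).1 = Weight.ones n)
    {n : ℕ} {c : C.cells n} (hc : Generated u n c)
    (hw : (ψ.toGlobHom.app n c).1 = Weight.ones n) : ∃ q, u.app n q = c := by
  induction hc with
  | of n q => exact ⟨q, rfl⟩
  | @id n c _ _ =>
    have := congrFun ((ψ.val_app_id c).symm.trans hw) (n + 1)
    simp [(ψ.toGlobHom.app n c).2.2 (n + 1) n.lt_succ_self, Weight.ones, Prod.ext_iff] at this
  | @comp p k c' c h hc' hc ih' ih =>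
    rcases Weight.vanishesAbove_of_glue_eq_ones (by omega) (hc'.admissible hψ)
      (hc.admissible hψ) ((ψ.val_app_comp h).symm.trans hw) with hv | hv
    · obtain rfl : c = iterId C.cells C.id' (k + 1) (C.srcIter (k + 1) c') :=
        ((hc.isIterId_of_vanishesAbove hψ (by omega) hv).eq_iterId (k + 1)).trans (by rw [h])
      rw [C.comp_unit_right p k c' h] at hw ⊢
      exact ih' hw
    · have hid := hc'.isIterId_of_vanishesAbove hψ (by omega) hv
      obtain rfl : c' = iterId C.cells C.id' (k + 1) (C.tgtIter (k + 1) c) :=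
        (hid.eq_iterId (k + 1)).trans (by rw [← hid.srcIter_eq_tgtIter, h])
      rw [C.comp_unit_left p k c h] at hw ⊢
      exact ih hw

end StrictOmegaCat.Generated

namespace CategoryTheory.Adjunction

variable {F : GlobSet ⥤ StrictOmegaCat} (adj : F ⊣ forgetStrict)

theorem homEquiv_symm_app_unit_app {Q : GlobSet} {C : StrictOmegaCat}
    (f : Q ⟶ forgetStrict.obj C) (n : ℕ) (q : Q.cells n) :
    ((adj.homEquiv Q C).symm f).toGlobHom.app n ((adj.unit.app Q).app n q) = f.app n q :=
  GlobHom.congr_app ((adj.homEquiv_unit Q C _).symm.trans (Equiv.apply_symm_apply _ f)) n q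

/-- Weighing `a` alone by one separates it from every other cell, and weighing factors through
the unit. -/
theorem unit_app_app_injective (Q : GlobSet) (n : ℕ) :
    Function.Injective ((adj.unit.app Q).app n) := by
  classical
  intro a b hab
  let w : ∀ m, Q.cells m → ℕ := fun m q => if (⟨m, q⟩ : Σ m, Q.cells m) = ⟨n, a⟩ then 1 else 0
  have hw : (Weight.weigh Q w).app n a = (Weight.weigh Q w).app n b :=
    (adj.homEquiv_symm_app_unit_app (C := weightCat) _ n a).symm.trans
      ((congrArg _ hab).trans (adj.homEquiv_symm_app_unit_app (C := weightCat) _ n b))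
  have hwn := congrArg (fun c : Weight.globSet.cells n => (c.1 n).1) hw
  simp only [Weight.weigh, Sigma.mk.injEq, Weight.weighSeq_self, heq_eq_eq, and_self, ↓reduceIte,
    true_and, left_eq_ite_iff, one_ne_zero, imp_false, Decidable.not_not, w] at hwn
  exact hwn.symm

theorem exists_unit_app_app_eq {Q₁ Q₂ : GlobSet} (φ : Q₁ ⟶ Q₂) {n : ℕ} (a : Q₂.cells n)
    (c : (F.obj Q₁).cells n)
    (h : (adj.unit.app Q₂).app n a = ((F ⋙ forgetStrict).map φ).app n c) :
    ∃ q, (adj.unit.app Q₁).app n q = c := by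
  set ψ₂ := (adj.homEquiv Q₂ weightCat).symm (Weight.weigh Q₂ fun _ _ => 1)
  have hψ₁ : (adj.homEquiv Q₁ weightCat).symm (Weight.weigh Q₁ fun _ _ => 1) = F.map φ ≫ ψ₂ :=
    (congrArg _ (Weight.comp_weigh_one φ)).symm.trans (adj.homEquiv_naturality_left_symm φ _)
  refine (StrictOmegaCat.generated_unit adj Q₁ n c).exists_eq_of_val_app_eq_ones
    (ψ := (adj.homEquiv Q₁ weightCat).symm (Weight.weigh Q₁ fun _ _ => 1)) (fun n q => ?_) ?_
  · exact (congrArg Subtype.val (adj.homEquiv_symm_app_unit_app _ n q)).trans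
      (Weight.weighSeq_one n q)
  · rw [hψ₁]
    exact (congrArg (fun x => (ψ₂.toGlobHom.app n x).1) h).symm.trans
      ((congrArg Subtype.val (adj.homEquiv_symm_app_unit_app _ n a)).trans
        (Weight.weighSeq_one n a))

end CategoryTheory.Adjunction

/-- The unit `η : Id_{Qf} ⇒ U ∘ F` of the free strict globular ω-category
adjunction `F ⊣ U` is a Cartesian natural transformation: for every morphism
`φ : Q₁ ⟶ Q₂` of globular ω-sets, the naturality square formed by `η_{Q₁}`, `φ`,
`(U∘F)(φ)` and `η_{Q₂}` is a pullback square in `Qf`. -/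
theorem free_strict_unit_cartesian (F : GlobSet ⥤ StrictOmegaCat) (adj : F ⊣ forgetStrict)
    {Q₁ Q₂ : GlobSet} (φ : Q₁ ⟶ Q₂) :
    IsPullback φ (adj.unit.app Q₁) (adj.unit.app Q₂) ((F ⋙ forgetStrict).map φ) := by
  refine GlobSet.isPullback_of_existsUnique (adj.unit.naturality φ) fun n a c h => ?_
  obtain ⟨q, rfl⟩ := adj.exists_unit_app_app_eq φ a c h
  refine ⟨q, ⟨adj.unit_app_app_injective Q₂ n ?_, rfl⟩,
    fun q' hq' => adj.unit_app_app_injective Q₁ n hq'.2⟩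
  exact (GlobHom.congr_app (adj.unit.naturality φ) n q).trans h.symm
end

section
/- The forgetful functor W from the category Q^{T̂,κ}_• of globular contracted T̂-collections over • to the category Q^{T̂}_• of globular T̂-collections over •, which forgets the contraction, is finitary, has a left adjoint, and the resulting adjunction is monadic. -/
open CategoryTheory CategoryTheory.Limits

/-- A fully involutive strict globular ω-category: a strict globular ω-category equipped,
for each `q : ℕ`, with grade-preserving involutions `inv q` that swap `q`-sources and
`q`-targets, commute with the other sources/targets, reverse `∘^k_q` and preserve the
other compositions, preserve identities, are involutive, commute pairwise, and act as
the identity on cells of dimension `≤ q`. -/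
structure StarOmegaCat extends StrictOmegaCat where
  inv : ∀ (q n : ℕ), toGlobSet.cells n → toGlobSet.cells n
  inv_src_self : ∀ q (x : toGlobSet.cells (q + 1)),
      inv q q (toGlobSet.src q x) = toGlobSet.tgt q (inv q (q + 1) x)
  inv_tgt_self : ∀ q (x : toGlobSet.cells (q + 1)),
      inv q q (toGlobSet.tgt q x) = toGlobSet.src q (inv q (q + 1) x)
  inv_src_ne : ∀ q p, p ≠ q → ∀ (x : toGlobSet.cells (p + 1)),
      inv q p (toGlobSet.src p x) = toGlobSet.src p (inv q (p + 1) x)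
  inv_tgt_ne : ∀ q p, p ≠ q → ∀ (x : toGlobSet.cells (p + 1)),
      inv q p (toGlobSet.tgt p x) = toGlobSet.tgt p (inv q (p + 1) x)
  inv_comp_self : ∀ p k (x' x : toGlobSet.cells (p + (k + 1)))
      (h : toGlobSet.srcIter (k + 1) x' = toGlobSet.tgtIter (k + 1) x)
      (h' : toGlobSet.srcIter (k + 1) (inv p (p + (k + 1)) x)
          = toGlobSet.tgtIter (k + 1) (inv p (p + (k + 1)) x')),
      inv p (p + (k + 1)) (comp p k x' x h)
        = comp p k (inv p (p + (k + 1)) x) (inv p (p + (k + 1)) x') h'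
  inv_comp_ne : ∀ q p k, q ≠ p → ∀ (x' x : toGlobSet.cells (p + (k + 1)))
      (h : toGlobSet.srcIter (k + 1) x' = toGlobSet.tgtIter (k + 1) x)
      (h' : toGlobSet.srcIter (k + 1) (inv q (p + (k + 1)) x')
          = toGlobSet.tgtIter (k + 1) (inv q (p + (k + 1)) x)),
      inv q (p + (k + 1)) (comp p k x' x h)
        = comp p k (inv q (p + (k + 1)) x') (inv q (p + (k + 1)) x) h'
  inv_id : ∀ q n x, inv q (n + 1) (id' n x) = id' n (inv q n x)
  inv_inv : ∀ q n x, inv q n (inv q n x) = x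
  inv_comm : ∀ q p n x, inv q n (inv p n x) = inv p n (inv q n x)
  inv_ground : ∀ q n, n ≤ q → ∀ x, inv q n x = x

/-- An involutive ω-functor between fully involutive strict globular ω-categories. -/
structure StarFunctor (C D : StarOmegaCat) where
  toF : C.toStrictOmegaCat ⟶ D.toStrictOmegaCat
  map_inv : ∀ q n x, toF.toGlobHom.app n (C.inv q n x) = D.inv q n (toF.toGlobHom.app n x)

theorem StarFunctor.hext {C D : StarOmegaCat} {F G : StarFunctor C D}
    (h : F.toF = G.toF) : F = G := by
  cases F; cases G; cases h; rfl

/-- The category `Cf*` of fully involutive strict globular ω-categories. -/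
instance : CategoryStruct StarOmegaCat where
  Hom := StarFunctor
  id C := { toF := 𝟙 C.toStrictOmegaCat, map_inv := fun _ _ _ => rfl }
  comp {C D E} F G :=
    { toF := F.toF ≫ G.toF
      map_inv := fun q n x => by
        show G.toF.toGlobHom.app n (F.toF.toGlobHom.app n (C.inv q n x))
          = E.inv q n (G.toF.toGlobHom.app n (F.toF.toGlobHom.app n x))
        rw [F.map_inv, G.map_inv] }

instance : Category StarOmegaCat where
  id_comp F := StarFunctor.hext (by
    show 𝟙 _ ≫ F.toF = F.toF
    simp)
  comp_id F := StarFunctor.hext (by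
    show F.toF ≫ 𝟙 _ = F.toF
    simp)
  assoc F G H := StarFunctor.hext (by
    show (F.toF ≫ G.toF) ≫ H.toF = F.toF ≫ (G.toF ≫ H.toF)
    simp)

/-- The forgetful functor `U* : Cf* ⥤ Qf`. -/
def forgetStar : StarOmegaCat ⥤ GlobSet where
  obj C := C.toStrictOmegaCat.toGlobSet
  map F := F.toF.toGlobHom
  map_id _ := rfl
  map_comp _ _ := rfl
/-! ### Globular `T`-collections, contracted collections, operadic magmas and operads
over a monad `T` on the category of globular ω-sets, relative to the terminal globular
ω-set `GlobSet.pt`. -/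

/-- A globular `T`-collection over `•`. -/
structure Coll (T : Monad GlobSet) : Type 1 where
  Q : GlobSet
  π : Q ⟶ T.toFunctor.obj GlobSet.pt

/-- A morphism of globular `T`-collections over `•`. -/
structure CollHom {T : Monad GlobSet} (X Y : Coll T) : Type where
  hom : X.Q ⟶ Y.Q
  hom_π : hom ≫ Y.π = X.π

theorem CollHom.hext {T : Monad GlobSet} {X Y : Coll T} {f g : CollHom X Y}
    (h : f.hom = g.hom) : f = g := by
  cases f; cases g; cases h; rfl

/-- Composite of morphisms of `T`-collections. -/
def CollHom.comp {T : Monad GlobSet} {X Y Z : Coll T} (f : CollHom X Y) (g : CollHom Y Z) :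
    CollHom X Z where
  hom := f.hom ≫ g.hom
  hom_π := by rw [Category.assoc, g.hom_π, f.hom_π]

/-- Identity morphism of a `T`-collection. -/
def CollHom.idc {T : Monad GlobSet} (X : Coll T) : CollHom X X where
  hom := 𝟙 X.Q
  hom_π := by simp

instance {T : Monad GlobSet} : Category (Coll T) where
  Hom := CollHom
  id := CollHom.idc
  comp := CollHom.comp
  id_comp f := CollHom.hext (by
    show 𝟙 _ ≫ f.hom = f.hom
    simp)
  comp_id f := CollHom.hext (by
    show f.hom ≫ 𝟙 _ = f.hom
    simp)
  assoc f g h := CollHom.hext (by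
    show (f.hom ≫ g.hom) ≫ h.hom = f.hom ≫ (g.hom ≫ h.hom)
    simp)

/-- In the bicategory of `T`-spans, the apex of the composite 1-cell `Q ∘ Q` of a
`T`-collection with itself: the pullback `Q ×_{T(•)} T(Q)`. -/
def Coll.apex {T : Monad GlobSet} (X : Coll T) : GlobSet :=
  GlobSet.pb X.π (T.toFunctor.map (GlobSet.toPt X.Q))

/-- The projection of the composite 1-cell `Q ∘ Q` to `T(•)`. -/
def Coll.compProj {T : Monad GlobSet} (X : Coll T) : X.apex ⟶ T.toFunctor.obj GlobSet.pt :=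
  GlobSet.pbSnd X.π (T.toFunctor.map (GlobSet.toPt X.Q)) ≫ T.toFunctor.map X.π
    ≫ T.μ.app GlobSet.pt

/-- A globular contracted `T`-collection over `•`. -/
structure CColl (T : Monad GlobSet) extends Coll T where
  contr : Contraction toColl.π

/-- A morphism of globular contracted `T`-collections over `•`. -/
structure CCollHom {T : Monad GlobSet} (X Y : CColl T) : Type where
  hom : X.toColl.Q ⟶ Y.toColl.Q
  hom_π : hom ≫ Y.toColl.π = X.toColl.π
  hom_contr : ∀ n xp xm y hp hs ht hp' hs' ht',
      hom.app (n + 1) (X.contr.κ n xp xm y hp hs ht)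
        = Y.contr.κ n (hom.app n xp) (hom.app n xm) y hp' hs' ht'

theorem CCollHom.hext {T : Monad GlobSet} {X Y : CColl T} {f g : CCollHom X Y}
    (h : f.hom = g.hom) : f = g := by
  cases f; cases g; cases h; rfl

instance {T : Monad GlobSet} : Category (CColl T) where
  Hom := CCollHom
  id X :=
    { hom := 𝟙 X.toColl.Q
      hom_π := by simp
      hom_contr := fun n xp xm y hp hs ht hp' hs' ht' => rfl }
  comp {X Y Z} f g :=
    { hom := f.hom ≫ g.hom
      hom_π := by rw [Category.assoc, g.hom_π, f.hom_π]
      hom_contr := fun n xp xm y hp hs ht hp' hs' ht' => by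
        have hpY : Y.toColl.Q.Parallel n (f.hom.app n xp) (f.hom.app n xm) :=
          GlobHom.parallel_map f.hom hp
        have hsY : (T.toFunctor.obj GlobSet.pt).src n y = Y.toColl.π.app n (f.hom.app n xm) := by
          rw [hs, ← f.hom_π]; rfl
        have htY : (T.toFunctor.obj GlobSet.pt).tgt n y = Y.toColl.π.app n (f.hom.app n xp) := by
          rw [ht, ← f.hom_π]; rfl
        have hpZ : Z.toColl.Q.Parallel n (g.hom.app n (f.hom.app n xp))
            (g.hom.app n (f.hom.app n xm)) := GlobHom.parallel_map g.hom hpY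
        have hsZ : (T.toFunctor.obj GlobSet.pt).src n y
            = Z.toColl.π.app n (g.hom.app n (f.hom.app n xm)) := by
          rw [hsY, ← g.hom_π]; rfl
        have htZ : (T.toFunctor.obj GlobSet.pt).tgt n y
            = Z.toColl.π.app n (g.hom.app n (f.hom.app n xp)) := by
          rw [htY, ← g.hom_π]; rfl
        show g.hom.app (n + 1) (f.hom.app (n + 1) (X.contr.κ n xp xm y hp hs ht)) = _
        rw [f.hom_contr n xp xm y hp hs ht hpY hsY htY,
          g.hom_contr n _ _ y hpY hsY htY hpZ hsZ htZ]
        rfl }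
  id_comp f := CCollHom.hext (by
    show 𝟙 _ ≫ f.hom = f.hom
    simp)
  comp_id f := CCollHom.hext (by
    show f.hom ≫ 𝟙 _ = f.hom
    simp)
  assoc f g h := CCollHom.hext (by
    show (f.hom ≫ g.hom) ≫ h.hom = f.hom ≫ (g.hom ≫ h.hom)
    simp)

/-- The forgetful functor `W` from globular contracted `T`-collections to globular
`T`-collections, forgetting the contraction. -/
def forgetCColl (T : Monad GlobSet) : CColl T ⥤ Coll T where
  obj X := X.toColl
  map f := ⟨f.hom, f.hom_π⟩
  map_id _ := CollHom.hext rfl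
  map_comp _ _ := CollHom.hext rfl

/-- A globular contracted `T`-operadic magma over `•`: a contracted `T`-collection
with a unit 2-cell `e` (over the unit of `T`) and a multiplication 2-cell
`m : Q ∘ Q ⟶ Q` (over the multiplication of `T`), not required to satisfy any
associativity or unitality axioms. -/
structure CMagma (T : Monad GlobSet) extends CColl T where
  e : GlobSet.pt ⟶ toColl.Q
  e_π : e ≫ toColl.π = T.η.app GlobSet.pt
  m : toColl.apex ⟶ toColl.Q
  m_π : m ≫ toColl.π = toColl.compProj

/-- The underlying collection of a contracted `T`-operadic magma. -/
abbrev CMagma.coll {T : Monad GlobSet} (M : CMagma T) : Coll T := M.toCColl.toColl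

/-- A morphism of globular contracted `T`-operadic magmas: a morphism of `T`-collections
commuting with units, multiplications and contractions. -/
structure CMagmaHom {T : Monad GlobSet} (M N : CMagma T) : Type where
  hom : M.coll.Q ⟶ N.coll.Q
  hom_π : hom ≫ N.coll.π = M.coll.π
  hom_e : M.e ≫ hom = N.e
  hom_contr : ∀ n xp xm y hp hs ht hp' hs' ht',
      hom.app (n + 1) (M.contr.κ n xp xm y hp hs ht)
        = N.contr.κ n (hom.app n xp) (hom.app n xm) y hp' hs' ht'
  hom_m : ∀ n (q : M.coll.Q.cells n) (z : (T.toFunctor.obj M.coll.Q).cells n)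
      (hqz : M.coll.π.app n q = (T.toFunctor.map (GlobSet.toPt M.coll.Q)).app n z)
      (hqz' : N.coll.π.app n (hom.app n q)
        = (T.toFunctor.map (GlobSet.toPt N.coll.Q)).app n ((T.toFunctor.map hom).app n z)),
      hom.app n (M.m.app n ⟨(q, z), hqz⟩)
        = N.m.app n ⟨(hom.app n q, (T.toFunctor.map hom).app n z), hqz'⟩

theorem CMagmaHom.hext {T : Monad GlobSet} {M N : CMagma T} {f g : CMagmaHom M N}
    (h : f.hom = g.hom) : f = g := by
  cases f; cases g; cases h; rfl

/-- The underlying collection morphism of a morphism of contracted `T`-operadic magmas. -/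
def CMagmaHom.toCollHom {T : Monad GlobSet} {M N : CMagma T} (f : CMagmaHom M N) :
    CollHom M.coll N.coll := ⟨f.hom, f.hom_π⟩

section MagmaCat
variable {T : Monad GlobSet}

theorem coll_pt_natural {M N : CMagma T} (f : CMagmaHom M N) (n : ℕ)
    (z : (T.toFunctor.obj M.coll.Q).cells n) :
    (T.toFunctor.map (GlobSet.toPt N.coll.Q)).app n ((T.toFunctor.map f.hom).app n z)
      = (T.toFunctor.map (GlobSet.toPt M.coll.Q)).app n z := by
  have : T.toFunctor.map f.hom ≫ T.toFunctor.map (GlobSet.toPt N.coll.Q)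
      = T.toFunctor.map (GlobSet.toPt M.coll.Q) := by
    rw [← CategoryTheory.Functor.map_comp]
    exact congrArg T.toFunctor.map (GlobSet.hom_pt_ext _ _)
  exact GlobHom.congr_app this n z

def CMagmaHom.idm (M : CMagma T) : CMagmaHom M M where
  hom := 𝟙 M.coll.Q
  hom_π := by simp
  hom_e := by simp
  hom_contr := fun n xp xm y hp hs ht hp' hs' ht' => rfl
  hom_m := fun n q z hqz hqz' => by
    show M.m.app n ⟨(q, z), hqz⟩ = M.m.app n ⟨((𝟙 M.coll.Q : M.coll.Q ⟶ _).app n q,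
      (T.toFunctor.map (𝟙 M.coll.Q)).app n z), hqz'⟩
    apply congrArg (M.m.app n)
    apply Subtype.ext
    have hz : (T.toFunctor.map (𝟙 M.coll.Q)).app n z = z := by
      rw [CategoryTheory.Functor.map_id]; rfl
    show (q, z) = ((𝟙 M.coll.Q : M.coll.Q ⟶ _).app n q, (T.toFunctor.map (𝟙 M.coll.Q)).app n z)
    rw [hz]
    rfl

def CMagmaHom.compm {M N P : CMagma T} (f : CMagmaHom M N) (g : CMagmaHom N P) :
    CMagmaHom M P where
  hom := f.hom ≫ g.hom
  hom_π := by rw [Category.assoc, g.hom_π, f.hom_π]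
  hom_e := by rw [← Category.assoc, f.hom_e, g.hom_e]
  hom_contr := fun n xp xm y hp hs ht hp' hs' ht' => by
    have hpY : N.coll.Q.Parallel n (f.hom.app n xp) (f.hom.app n xm) :=
      GlobHom.parallel_map f.hom hp
    have hsY : (T.toFunctor.obj GlobSet.pt).src n y = N.coll.π.app n (f.hom.app n xm) := by
      rw [hs, ← f.hom_π]; rfl
    have htY : (T.toFunctor.obj GlobSet.pt).tgt n y = N.coll.π.app n (f.hom.app n xp) := by
      rw [ht, ← f.hom_π]; rfl
    have hpZ : P.coll.Q.Parallel n (g.hom.app n (f.hom.app n xp))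
        (g.hom.app n (f.hom.app n xm)) := GlobHom.parallel_map g.hom hpY
    have hsZ : (T.toFunctor.obj GlobSet.pt).src n y
        = P.coll.π.app n (g.hom.app n (f.hom.app n xm)) := by
      rw [hsY, ← g.hom_π]; rfl
    have htZ : (T.toFunctor.obj GlobSet.pt).tgt n y
        = P.coll.π.app n (g.hom.app n (f.hom.app n xp)) := by
      rw [htY, ← g.hom_π]; rfl
    show g.hom.app (n + 1) (f.hom.app (n + 1) (M.contr.κ n xp xm y hp hs ht)) = _
    rw [f.hom_contr n xp xm y hp hs ht hpY hsY htY,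
      g.hom_contr n _ _ y hpY hsY htY hpZ hsZ htZ]
    rfl
  hom_m := fun n q z hqz hqz' => by
    have h₁ : N.coll.π.app n (f.hom.app n q)
        = (T.toFunctor.map (GlobSet.toPt N.coll.Q)).app n ((T.toFunctor.map f.hom).app n z) := by
      rw [coll_pt_natural f n z]
      have : N.coll.π.app n (f.hom.app n q) = M.coll.π.app n q := by
        rw [← f.hom_π]; rfl
      rw [this, hqz]
    have h₂ : P.coll.π.app n (g.hom.app n (f.hom.app n q))
        = (T.toFunctor.map (GlobSet.toPt P.coll.Q)).app n
            ((T.toFunctor.map g.hom).app n ((T.toFunctor.map f.hom).app n z)) := by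
      rw [coll_pt_natural g n _]
      have : P.coll.π.app n (g.hom.app n (f.hom.app n q)) = N.coll.π.app n (f.hom.app n q) := by
        rw [← g.hom_π]; rfl
      rw [this, h₁]
    show g.hom.app n (f.hom.app n (M.m.app n ⟨(q, z), hqz⟩)) = _
    rw [f.hom_m n q z hqz h₁, g.hom_m n _ _ h₁ h₂]
    apply congrArg (P.m.app n)
    apply Subtype.ext
    show ((g.hom.app n (f.hom.app n q)),
        (T.toFunctor.map g.hom).app n ((T.toFunctor.map f.hom).app n z)) = _
    have : (T.toFunctor.map g.hom).app n ((T.toFunctor.map f.hom).app n z)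
        = (T.toFunctor.map (f.hom ≫ g.hom)).app n z := by
      rw [CategoryTheory.Functor.map_comp]; rfl
    rw [this]
    rfl

instance : Category (CMagma T) where
  Hom := CMagmaHom
  id := CMagmaHom.idm
  comp := CMagmaHom.compm
  id_comp f := CMagmaHom.hext (by
    show 𝟙 _ ≫ f.hom = f.hom
    simp)
  comp_id f := CMagmaHom.hext (by
    show f.hom ≫ 𝟙 _ = f.hom
    simp)
  assoc f g h := CMagmaHom.hext (by
    show (f.hom ≫ g.hom) ≫ h.hom = f.hom ≫ (g.hom ≫ h.hom)
    simp)

end MagmaCat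

/-- A globular contracted `T`-operad over `•`: a contracted `T`-operadic magma whose unit
and multiplication satisfy the (elementwise) monadic unitality and associativity axioms of
a monad on `•` internal to the bicategory of `T`-spans. -/
structure COperad (T : Monad GlobSet) extends CMagma T where
  unit_right : ∀ n (q : toColl.Q.cells n)
      (h : toColl.π.app n q = (T.toFunctor.map (GlobSet.toPt toColl.Q)).app n
            ((T.toFunctor.map e).app n (toColl.π.app n q))),
      m.app n ⟨(q, (T.toFunctor.map e).app n (toColl.π.app n q)), h⟩ = q
  unit_left : ∀ n (q : toColl.Q.cells n)
      (h : toColl.π.app n (e.app n PUnit.unit)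
          = (T.toFunctor.map (GlobSet.toPt toColl.Q)).app n ((T.η.app toColl.Q).app n q)),
      m.app n ⟨(e.app n PUnit.unit, (T.η.app toColl.Q).app n q), h⟩ = q
  massoc : ∀ n (q : toColl.Q.cells n) (z w : (T.toFunctor.obj toColl.Q).cells n)
      (θ : (T.toFunctor.obj toColl.apex).cells n)
      (hz : (T.toFunctor.map (GlobSet.pbFst toColl.π
              (T.toFunctor.map (GlobSet.toPt toColl.Q)))).app n θ = z)
      (hw : (T.μ.app toColl.Q).app n
              ((T.toFunctor.map (GlobSet.pbSnd toColl.π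
                (T.toFunctor.map (GlobSet.toPt toColl.Q)))).app n θ) = w)
      (h₁ : toColl.π.app n q = (T.toFunctor.map (GlobSet.toPt toColl.Q)).app n z)
      (h₂ : toColl.π.app n (m.app n ⟨(q, z), h₁⟩)
          = (T.toFunctor.map (GlobSet.toPt toColl.Q)).app n w)
      (h₃ : toColl.π.app n q
          = (T.toFunctor.map (GlobSet.toPt toColl.Q)).app n ((T.toFunctor.map m).app n θ)),
      m.app n ⟨(m.app n ⟨(q, z), h₁⟩, w), h₂⟩ = m.app n ⟨(q, (T.toFunctor.map m).app n θ), h₃⟩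

/-- Morphisms of globular contracted `T`-operads. -/
abbrev COperadHom {T : Monad GlobSet} (P P' : COperad T) := CMagmaHom P.toCMagma P'.toCMagma

instance {T : Monad GlobSet} : Category (COperad T) where
  Hom P P' := COperadHom P P'
  id P := CMagmaHom.idm P.toCMagma
  comp := CMagmaHom.compm
  id_comp f := CMagmaHom.hext (by
    show 𝟙 _ ≫ f.hom = f.hom
    simp)
  comp_id f := CMagmaHom.hext (by
    show f.hom ≫ 𝟙 _ = f.hom
    simp)
  assoc f g h := CMagmaHom.hext (by
    show (f.hom ≫ g.hom) ≫ h.hom = f.hom ≫ (g.hom ≫ h.hom)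
    simp)

/-- The forgetful functor from globular contracted `T`-operads to globular `T`-collections. -/
def forgetCOperad (T : Monad GlobSet) : COperad T ⥤ Coll T where
  obj P := P.toCMagma.coll
  map f := f.toCollHom
  map_id _ := CollHom.hext rfl
  map_comp _ _ := CollHom.hext rfl

/-- The empty globular `T`-collection, which is initial among `T`-collections. -/
def emptyColl (T : Monad GlobSet) : Coll T where
  Q := GlobSet.empty
  π := ⟨fun _ x => x.elim, fun _ x => x.elim, fun _ x => x.elim⟩
/-! ### Cartesian functors, Cartesian natural transformations, finitary functors,
finitely presentable objects and locally finitely presentable categories. -/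

universe w₁ w₂ u₁ u₂ v₁ v₂

/-- A functor is Cartesian if it preserves pullbacks. -/
def PreservesPB {C : Type u₁} [Category.{v₁} C] {D : Type u₂} [Category.{v₂} D]
    (F : C ⥤ D) : Prop :=
  ∀ {P X Y Z : C} (fst : P ⟶ X) (snd : P ⟶ Y) (f : X ⟶ Z) (g : Y ⟶ Z),
    IsPullback fst snd f g → IsPullback (F.map fst) (F.map snd) (F.map f) (F.map g)

/-- A natural transformation is Cartesian if all its naturality squares are pullbacks. -/
def CartesianNT {C : Type u₁} [Category.{v₁} C] {D : Type u₂} [Category.{v₂} D]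
    {F G : C ⥤ D} (α : F ⟶ G) : Prop :=
  ∀ {X Y : C} (f : X ⟶ Y), IsPullback (F.map f) (α.app X) (α.app Y) (G.map f)

/-- A functor is finitary if it preserves (small) filtered colimits. -/
def Finitary {C : Type u₁} [Category.{v₁} C] {D : Type u₂} [Category.{v₂} D]
    (F : C ⥤ D) : Prop :=
  ∀ (J : Type) [SmallCategory J] [IsFiltered J], Nonempty (PreservesColimitsOfShape J F)

/-- An object is finitely presentable if its covariant Hom-functor is finitary. -/
def IsFinPres {C : Type u₁} [Category.{v₁} C] (X : C) : Prop :=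
  Finitary (coyoneda.obj (Opposite.op X))

/-- A category is locally finitely presentable if it is cocomplete, its full subcategory
of finitely presentable objects is essentially small, and every object is a filtered
colimit of finitely presentable objects. -/
def IsLFP (C : Type u₁) [Category.{v₁} C] : Prop :=
  HasColimitsOfSize.{0, 0} C ∧
  EssentiallySmall.{0} (ObjectProperty.FullSubcategory (IsFinPres (C := C))) ∧
  ∀ X : C, ∃ (J : Type) (_ : SmallCategory J), IsFiltered J ∧
    ∃ (D : J ⥤ C) (c : Cocone D),
      (∀ j, IsFinPres (D.obj j)) ∧ Nonempty (IsColimit c) ∧ c.pt = X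

/-!
A contraction is an operation whose arity, a parallel pair `(x⁺, x⁻)` of cells together with a
cell `y` of `T(•)` between their images, is a finite limit built from the underlying globular set.
So contractions can be adjoined freely, by adding formal cells `κ x⁺ y x⁻` level by level, and
they pass to the colimits relevant here: to a split coequalizer by transport along the
splitting, and to a filtered colimit because a parallel pair in a filtered colimit of globular
sets is already a parallel pair at some stage of the diagram. In both cases the forgetful
functor creates the colimit, which gives finitarity and, by Beck's theorem, monadicity.
-/

theorem Contraction.κ_congr {Q R : GlobSet} {π : Q ⟶ R} (c : Contraction π) {n : ℕ}
    {xp xp' xm xm' : Q.cells n} (hxp : xp = xp') (hxm : xm = xm') (y : R.cells (n + 1))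
    (hp hs ht hp' hs' ht') :
    c.κ n xp xm y hp hs ht = c.κ n xp' xm' y hp' hs' ht' := by
  subst hxp hxm; rfl

namespace CColl

variable {T : Monad GlobSet} {X Y : CColl T}

theorem map_κ (φ : X ⟶ Y) {n : ℕ} (xp xm : X.Q.cells n)
    (y : (T.toFunctor.obj GlobSet.pt).cells (n + 1)) (hp hs ht) :
    φ.hom.app (n + 1) (X.contr.κ n xp xm y hp hs ht)
      = Y.contr.κ n (φ.hom.app n xp) (φ.hom.app n xm) y (GlobHom.parallel_map φ.hom hp)
          (hs.trans (GlobHom.congr_app φ.hom_π n xm).symm)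
          (ht.trans (GlobHom.congr_app φ.hom_π n xp).symm) :=
  φ.hom_contr n xp xm y hp hs ht _ _ _

def homMk (φ : X.toColl ⟶ Y.toColl)
    (hφ : ∀ n xp xm y hp hs ht, φ.hom.app (n + 1) (X.contr.κ n xp xm y hp hs ht)
      = Y.contr.κ n (φ.hom.app n xp) (φ.hom.app n xm) y (GlobHom.parallel_map φ.hom hp)
          (hs.trans (GlobHom.congr_app φ.hom_π n xm).symm)
          (ht.trans (GlobHom.congr_app φ.hom_π n xp).symm)) : X ⟶ Y where
  hom := φ.hom
  hom_π := φ.hom_π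
  hom_contr n xp xm y hp hs ht _ _ _ := hφ n xp xm y hp hs ht

instance : (forgetCColl T).Faithful where
  map_injective h := CCollHom.hext (congrArg CollHom.hom h)

end CColl

/-! ### Free contractions -/

namespace FreeContraction

variable {T : Monad GlobSet} (X : Coll T)

/-- Formal cells over `X`; the cells of the free contracted collection are the
`WellFormed` ones. -/
inductive Term : ℕ → Type
  | of {n} : X.Q.cells n → Term n
  | κ {n} : Term n → Term n → (T.toFunctor.obj GlobSet.pt).cells (n + 1) → Term (n + 1)

variable {X}

namespace Term

def src : ∀ {n}, Term X (n + 1) → Term X n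
  | _, of x => of (X.Q.src _ x)
  | _, κ _ b _ => b

def tgt : ∀ {n}, Term X (n + 1) → Term X n
  | _, of x => of (X.Q.tgt _ x)
  | _, κ a _ _ => a

def proj : ∀ {n}, Term X n → (T.toFunctor.obj GlobSet.pt).cells n
  | _, of x => X.π.app _ x
  | _, κ _ _ y => y

def Parallel : ∀ {n}, Term X n → Term X n → Prop
  | 0, _, _ => True
  | _ + 1, a, b => a.src = b.src ∧ a.tgt = b.tgt

def WellFormed : ∀ {n}, Term X n → Prop
  | _, of _ => True
  | _, κ a b y => a.WellFormed ∧ b.WellFormed ∧ a.Parallel b ∧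
      (T.toFunctor.obj GlobSet.pt).src _ y = b.proj ∧
      (T.toFunctor.obj GlobSet.pt).tgt _ y = a.proj

theorem WellFormed.src : ∀ {n} {c : Term X (n + 1)}, c.WellFormed → c.src.WellFormed
  | _, of _, _ => trivial
  | _, κ _ _ _, h => h.2.1

theorem WellFormed.tgt : ∀ {n} {c : Term X (n + 1)}, c.WellFormed → c.tgt.WellFormed
  | _, of _, _ => trivial
  | _, κ _ _ _, h => h.1

theorem proj_src : ∀ {n} {c : Term X (n + 1)}, c.WellFormed →
    (T.toFunctor.obj GlobSet.pt).src n c.proj = c.src.proj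
  | _, of x, _ => X.π.app_src _ x
  | _, κ _ _ _, h => h.2.2.2.1

theorem proj_tgt : ∀ {n} {c : Term X (n + 1)}, c.WellFormed →
    (T.toFunctor.obj GlobSet.pt).tgt n c.proj = c.tgt.proj
  | _, of x, _ => X.π.app_tgt _ x
  | _, κ _ _ _, h => h.2.2.2.2

theorem src_src : ∀ {n} {c : Term X (n + 2)}, c.WellFormed → c.src.src = c.tgt.src
  | _, of x, _ => congrArg of (X.Q.glob_ss _ x)
  | _, κ _ _ _, h => h.2.2.1.1.symm

theorem tgt_tgt : ∀ {n} {c : Term X (n + 2)}, c.WellFormed → c.src.tgt = c.tgt.tgt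
  | _, of x, _ => congrArg of (X.Q.glob_tt _ x)
  | _, κ _ _ _, h => h.2.2.1.2.symm

end Term

variable (X) in
def globSet : GlobSet where
  cells n := { c : Term X n // c.WellFormed }
  src _ c := ⟨c.1.src, c.2.src⟩
  tgt _ c := ⟨c.1.tgt, c.2.tgt⟩
  glob_ss _ c := Subtype.ext (Term.src_src c.2)
  glob_tt _ c := Subtype.ext (Term.tgt_tgt c.2)

theorem parallel_iff {n} {a b : (globSet X).cells n} :
    (globSet X).Parallel n a b ↔ a.1.Parallel b.1 := by
  cases n with
  | zero => exact Iff.rfl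
  | succ n => exact and_congr Subtype.ext_iff Subtype.ext_iff

variable (X)

def free : CColl T where
  Q := globSet X
  π := ⟨fun _ c => c.1.proj, fun _ c => Term.proj_src c.2, fun _ c => Term.proj_tgt c.2⟩
  contr :=
    { κ := fun _ xp xm y hp hs ht => ⟨.κ xp.1 xm.1 y, xp.2, xm.2, parallel_iff.1 hp, hs, ht⟩
      κ_src := fun _ _ _ _ _ _ _ => rfl
      κ_tgt := fun _ _ _ _ _ _ _ => rfl
      κ_π := fun _ _ _ _ _ _ _ => rfl }

def unit : X ⟶ (free X).toColl where
  hom := ⟨fun _ x => ⟨.of x, trivial⟩, fun _ _ => rfl, fun _ _ => rfl⟩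
  hom_π := rfl

section Lift

variable {X} {Y : CColl T} (g : X ⟶ Y.toColl)

/-- The extension of `g` to the well-formed terms of level `n`. It is built by recursion on `n`,
since interpreting `κ a b y` needs the extensions of `a` and `b` to be parallel. -/
structure LevelLift (n : ℕ) where
  map : ∀ c : Term X n, c.WellFormed → Y.Q.cells n
  π_map : ∀ c h, Y.π.app n (map c h) = c.proj
  map_of : ∀ x h, map (.of x) h = g.hom.app n x
  parallel_map : ∀ a b ha hb, a.Parallel b → Y.Q.Parallel n (map a ha) (map b hb)

variable {g}

namespace LevelLift

variable {n : ℕ} (P : LevelLift g n)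

def next : ∀ c : Term X (n + 1), c.WellFormed → Y.Q.cells (n + 1)
  | .of x, _ => g.hom.app (n + 1) x
  | .κ a b y, h =>
    Y.contr.κ n (P.map a h.1) (P.map b h.2.1) y (P.parallel_map a b h.1 h.2.1 h.2.2.1)
      (h.2.2.2.1.trans (P.π_map b _).symm) (h.2.2.2.2.trans (P.π_map a _).symm)

theorem src_next (c : Term X (n + 1)) (h : c.WellFormed) :
    Y.Q.src n (P.next c h) = P.map c.src h.src := by
  cases c with
  | of x => exact (g.hom.app_src n x).trans (P.map_of _ _).symm
  | κ a b y => exact Y.contr.κ_src ..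

theorem tgt_next (c : Term X (n + 1)) (h : c.WellFormed) :
    Y.Q.tgt n (P.next c h) = P.map c.tgt h.tgt := by
  cases c with
  | of x => exact (g.hom.app_tgt n x).trans (P.map_of _ _).symm
  | κ a b y => exact Y.contr.κ_tgt ..

theorem π_next (c : Term X (n + 1)) (h : c.WellFormed) :
    Y.π.app (n + 1) (P.next c h) = c.proj := by
  cases c with
  | of x => exact GlobHom.congr_app g.hom_π (n + 1) x
  | κ a b y => exact Y.contr.κ_π ..

end LevelLift

variable (g)

def levelLift : ∀ n, LevelLift g n
  | 0 =>
    { map := fun c _ => match c with | .of x => g.hom.app 0 x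
      π_map := fun c _ => match c with | .of x => GlobHom.congr_app g.hom_π 0 x
      map_of := fun _ _ => rfl
      parallel_map := fun _ _ _ _ _ => trivial }
  | n + 1 =>
    { map := (levelLift n).next
      π_map := (levelLift n).π_next
      map_of := fun _ _ => rfl
      parallel_map := fun a b ha hb hab =>
        ⟨by rw [LevelLift.src_next, LevelLift.src_next]; congr 1; exact hab.1,
         by rw [LevelLift.tgt_next, LevelLift.tgt_next]; congr 1; exact hab.2⟩ }

def lift : free X ⟶ Y :=
  CColl.homMk
    { hom :=
        { app := fun n c => (levelLift g n).map c.1 c.2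
          app_src := fun n c => (levelLift g n).src_next c.1 c.2
          app_tgt := fun n c => (levelLift g n).tgt_next c.1 c.2 }
      hom_π := GlobHom.hext fun n c => (levelLift g n).π_map c.1 c.2 }
    fun _ _ _ _ _ _ _ => rfl

theorem unit_comp_lift : unit X ≫ (forgetCColl T).map (lift g) = g :=
  CollHom.hext (GlobHom.hext fun n x => (levelLift g n).map_of x trivial)

theorem eq_lift (φ : free X ⟶ Y) (hφ : unit X ≫ (forgetCColl T).map φ = g) :
    φ = lift g := by
  suffices ∀ {n} (c : Term X n) (h : c.WellFormed),
      φ.hom.app n ⟨c, h⟩ = (levelLift g n).map c h from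
    CCollHom.hext (GlobHom.hext fun n c => this c.1 c.2)
  intro n c
  induction c with
  | of x =>
    intro h
    exact (GlobHom.congr_app (congrArg CollHom.hom hφ) _ x).trans
      ((levelLift g _).map_of x h).symm
  | κ a b y iha ihb =>
    intro h
    exact (CColl.map_κ φ ⟨a, h.1⟩ ⟨b, h.2.1⟩ y (parallel_iff.2 h.2.2.1) h.2.2.2.1
      h.2.2.2.2).trans (Contraction.κ_congr _ (iha h.1) (ihb h.2.1) y ..)

end Lift

def homEquiv (X : Coll T) (Y : CColl T) : (free X ⟶ Y) ≃ (X ⟶ (forgetCColl T).obj Y) where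
  toFun φ := unit X ≫ (forgetCColl T).map φ
  invFun := lift
  left_inv φ := (eq_lift _ φ rfl).symm
  right_inv := unit_comp_lift

noncomputable def adjunction (T : Monad GlobSet) :
    Adjunction.leftAdjointOfEquiv (G := forgetCColl T) (F_obj := free) homEquiv
      (fun _ _ _ _ _ => rfl) ⊣ forgetCColl T :=
  Adjunction.adjunctionOfEquivLeft _ _

end FreeContraction

/-! ### Split coequalizers -/

namespace CColl

variable {T : Monad GlobSet}

section SplitCoequalizer

variable {A B : CColl T} {f g : A ⟶ B} {Z : Coll T} {e : B.toColl ⟶ Z}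
  (h : IsSplitCoequalizer ((forgetCColl T).map f) ((forgetCColl T).map g) e)

def splitCoequalizerContraction : Contraction Z.π where
  κ n xp xm y hp hs ht :=
    e.hom.app (n + 1) (B.contr.κ n (h.rightSection.hom.app n xp) (h.rightSection.hom.app n xm) y
      (GlobHom.parallel_map h.rightSection.hom hp)
      (hs.trans (GlobHom.congr_app h.rightSection.hom_π n xm).symm)
      (ht.trans (GlobHom.congr_app h.rightSection.hom_π n xp).symm))
  κ_src n _ xm _ _ _ _ := (e.hom.app_src n _).trans ((congrArg _ (B.contr.κ_src ..)).trans
    (GlobHom.congr_app (congrArg CollHom.hom h.rightSection_π) n xm))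
  κ_tgt n xp _ _ _ _ _ := (e.hom.app_tgt n _).trans ((congrArg _ (B.contr.κ_tgt ..)).trans
    (GlobHom.congr_app (congrArg CollHom.hom h.rightSection_π) n xp))
  κ_π n _ _ _ _ _ _ := (GlobHom.congr_app e.hom_π (n + 1) _).trans (B.contr.κ_π ..)

def splitCoequalizer : CColl T where
  toColl := Z
  contr := splitCoequalizerContraction h

/-- `e` commutes with contractions: with `s` and `t` the right and left sections, write
`b = g (t b)` and `s (e b) = f (t b)`, and use `e ∘ f = e ∘ g`. -/
def splitCoequalizerπ : B ⟶ splitCoequalizer h :=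
  homMk e fun n xp xm y hp hs ht => by
    let t := h.leftSection
    have hg : ∀ k x, g.hom.app k (t.hom.app k x) = x := fun k x =>
      GlobHom.congr_app (congrArg CollHom.hom h.leftSection_bottom) k x
    have hf : ∀ k x, f.hom.app k (t.hom.app k x) = h.rightSection.hom.app k (e.hom.app k x) :=
      fun k x => GlobHom.congr_app (congrArg CollHom.hom h.leftSection_top) k x
    have hfg : ∀ k x, e.hom.app k (f.hom.app k x) = e.hom.app k (g.hom.app k x) := fun k x =>
      GlobHom.congr_app (congrArg CollHom.hom h.condition) k x
    have hpA := GlobHom.parallel_map t.hom hp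
    have hsA := hs.trans (GlobHom.congr_app t.hom_π n xm).symm
    have htA := ht.trans (GlobHom.congr_app t.hom_π n xp).symm
    have hκ : B.contr.κ n xp xm y hp hs ht
        = g.hom.app (n + 1) (A.contr.κ n (t.hom.app n xp) (t.hom.app n xm) y hpA hsA htA) :=
      (Contraction.κ_congr _ (hg n xp).symm (hg n xm).symm y ..).trans (map_κ g ..).symm
    exact (congrArg _ hκ).trans ((hfg _ _).symm.trans (congrArg _
      ((map_κ f ..).trans (Contraction.κ_congr _ (hf n xp) (hf n xm) y ..))))

def splitCoequalizerCofork : Cofork f g :=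
  Cofork.ofπ (splitCoequalizerπ h) ((forgetCColl T).map_injective h.condition)

def isColimitMapSplitCoequalizerCofork :
    IsColimit ((forgetCColl T).mapCocone (splitCoequalizerCofork h)) :=
  (isColimitMapCoconeCoforkEquiv _ _).symm h.isCoequalizer

def isColimitSplitCoequalizerCofork : IsColimit (splitCoequalizerCofork h) :=
  IsColimit.ofFaithful (forgetCColl T) (isColimitMapSplitCoequalizerCofork h)
    (fun s : Cofork f g => homMk (h.rightSection ≫ (forgetCColl T).map s.π)
      fun n xp xm y hp hs ht => by
        have fac : ∀ k b,
            s.π.hom.app k (h.rightSection.hom.app k (e.hom.app k b)) = s.π.hom.app k b :=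
          fun k b => GlobHom.congr_app (congrArg CollHom.hom
            ((isColimitMapSplitCoequalizerCofork h).fac ((forgetCColl T).mapCocone s) .one)) k b
        exact (fac (n + 1) _).trans
          ((map_κ s.π ..).trans (Contraction.κ_congr _ rfl rfl y ..)))
    fun _ => rfl

end SplitCoequalizer

instance : Monad.HasCoequalizerOfIsSplitPair (forgetCColl T) where
  out _ _ _ := ⟨⟨⟨_,
    isColimitSplitCoequalizerCofork (HasSplitCoequalizer.isSplitCoequalizer _ _)⟩⟩⟩

instance : Monad.PreservesColimitOfIsSplitPair (forgetCColl T) where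
  out _ _ _ := preservesColimit_of_preserves_colimit_cocone
    (isColimitSplitCoequalizerCofork (HasSplitCoequalizer.isSplitCoequalizer _ _))
    (isColimitMapSplitCoequalizerCofork _)

/-- The inverse `ψ` of the underlying morphism of `φ` commutes with contractions:
`ψ (κ xp xm) = ψ (κ (φ ψ xp) (φ ψ xm))`, which is `ψ (φ (κ (ψ xp) (ψ xm))) = κ (ψ xp) (ψ xm)`. -/
instance : (forgetCColl T).ReflectsIsomorphisms where
  reflects {X Y} φ _ := by
    let ψ := inv ((forgetCColl T).map φ)
    have φψ : ∀ n x, φ.hom.app n (ψ.hom.app n x) = x := fun n x =>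
      GlobHom.congr_app (congrArg CollHom.hom (IsIso.inv_hom_id ((forgetCColl T).map φ))) n x
    have ψφ : ∀ n x, ψ.hom.app n (φ.hom.app n x) = x := fun n x =>
      GlobHom.congr_app (congrArg CollHom.hom (IsIso.hom_inv_id ((forgetCColl T).map φ))) n x
    let ψ' : Y ⟶ X := homMk ψ fun n xp xm y hp hs ht => by
      rw [← ψφ (n + 1) (X.contr.κ ..), map_κ φ]
      exact congrArg _ (Contraction.κ_congr _ (φψ n xp).symm (φψ n xm).symm y ..)
    exact ⟨ψ', (forgetCColl T).map_injective (IsIso.hom_inv_id ((forgetCColl T).map φ)),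
      (forgetCColl T).map_injective (IsIso.inv_hom_id ((forgetCColl T).map φ))⟩

end CColl

/-! ### Colimits of globular sets and collections -/

namespace GlobSet

def cellsFunctor (n : ℕ) : GlobSet ⥤ Type where
  obj Q := Q.cells n
  map f := ↾(f.app n)

def srcNat (n : ℕ) : cellsFunctor (n + 1) ⟶ cellsFunctor n where
  app Q := ↾(Q.src n)
  naturality _ _ f := by ext x; exact f.app_src n x

def tgtNat (n : ℕ) : cellsFunctor (n + 1) ⟶ cellsFunctor n where
  app Q := ↾(Q.tgt n)
  naturality _ _ f := by ext x; exact f.app_tgt n x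

variable {J : Type} [SmallCategory J] (D : J ⥤ GlobSet)

abbrev colimCells (n : ℕ) : Type := colimit (D ⋙ cellsFunctor n)

noncomputable def colimι (j : J) (n : ℕ) (x : (D.obj j).cells n) : colimCells D n :=
  colimit.ι (D ⋙ cellsFunctor n) j x

theorem colimι_surjective {n : ℕ} (x : colimCells D n) : ∃ j y, colimι D j n y = x :=
  Types.jointly_surjective' x

theorem colimι_map {j k : J} (f : j ⟶ k) (n : ℕ) (x : (D.obj j).cells n) :
    colimι D k n ((D.map f).app n x) = colimι D j n x :=
  colimit.w_apply (D ⋙ cellsFunctor n) f x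

noncomputable def colimSrc (n : ℕ) : colimCells D (n + 1) → colimCells D n :=
  colimMap (Functor.whiskerLeft D (srcNat n))

noncomputable def colimTgt (n : ℕ) : colimCells D (n + 1) → colimCells D n :=
  colimMap (Functor.whiskerLeft D (tgtNat n))

@[simp] theorem colimSrc_colimι (j : J) (n : ℕ) (x : (D.obj j).cells (n + 1)) :
    colimSrc D n (colimι D j (n + 1) x) = colimι D j n ((D.obj j).src n x) :=
  colimit.ι_map_apply _ _ _

@[simp] theorem colimTgt_colimι (j : J) (n : ℕ) (x : (D.obj j).cells (n + 1)) :
    colimTgt D n (colimι D j (n + 1) x) = colimι D j n ((D.obj j).tgt n x) :=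
  colimit.ι_map_apply _ _ _

noncomputable def colim : GlobSet where
  cells := colimCells D
  src := colimSrc D
  tgt := colimTgt D
  glob_ss n x := by
    obtain ⟨j, x, rfl⟩ := colimι_surjective D x
    simp [glob_ss]
  glob_tt n x := by
    obtain ⟨j, x, rfl⟩ := colimι_surjective D x
    simp [glob_tt]

noncomputable def colimCocone : Cocone D where
  pt := colim D
  ι.app j :=
    ⟨colimι D j, fun _ x => colimSrc_colimι D j _ x, fun _ x => colimTgt_colimι D j _ x⟩
  ι.naturality _ _ f := GlobHom.hext fun n x => colimι_map D f n x

noncomputable def colimDesc (s : Cocone D) (n : ℕ) : colimCells D n → s.pt.cells n :=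
  colimit.desc (D ⋙ cellsFunctor n) ((cellsFunctor n).mapCocone s)

@[simp] theorem colimDesc_colimι (s : Cocone D) (j : J) (n : ℕ) (x : (D.obj j).cells n) :
    colimDesc D s n (colimι D j n x) = (s.ι.app j).app n x :=
  colimit.ι_desc_apply _ _ _

noncomputable def colimDescHom (s : Cocone D) : colim D ⟶ s.pt where
  app := colimDesc D s
  app_src n x := by
    obtain ⟨j, x, rfl⟩ := colimι_surjective D x
    simp [colim, GlobHom.app_src]
  app_tgt n x := by
    obtain ⟨j, x, rfl⟩ := colimι_surjective D x
    simp [colim, GlobHom.app_tgt]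

noncomputable def colimCoconeIsColimit : IsColimit (colimCocone D) where
  desc := colimDescHom D
  fac s j := GlobHom.hext fun n x => colimDesc_colimι D s j n x
  uniq s m hm := GlobHom.hext fun n x => by
    obtain ⟨j, x, rfl⟩ := colimι_surjective D x
    exact (GlobHom.congr_app (hm j) n x).trans (colimDesc_colimι D s j n x).symm

section Filtered

variable [IsFiltered J]

theorem colimι_eq_iff {j k : J} {n : ℕ} {x : (D.obj j).cells n} {y : (D.obj k).cells n} :
    colimι D j n x = colimι D k n y ↔
      ∃ (l : J) (f : j ⟶ l) (g : k ⟶ l), (D.map f).app n x = (D.map g).app n y :=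
  Types.FilteredColimit.colimit_eq_iff (D ⋙ cellsFunctor n)

theorem exists_map_eq_of_colimι_eq₂ {j k : J} {n : ℕ} {x x' : (D.obj j).cells n}
    {y y' : (D.obj k).cells n} (hx : colimι D j n x = colimι D k n y)
    (hx' : colimι D j n x' = colimι D k n y') :
    ∃ (l : J) (f : j ⟶ l) (g : k ⟶ l),
      (D.map f).app n x = (D.map g).app n y ∧ (D.map f).app n x' = (D.map g).app n y' := by
  obtain ⟨l₁, f₁, g₁, h₁⟩ := (colimι_eq_iff D).1 hx
  obtain ⟨l₂, f₂, g₂, h₂⟩ := (colimι_eq_iff D).1 hx'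
  obtain ⟨l, α, β, hf, hg⟩ := IsFiltered.bowtie f₁ f₂ g₁ g₂
  refine ⟨l, f₁ ≫ α, g₁ ≫ α, ?_, ?_⟩
  · simp only [Functor.map_comp, GlobHom.comp_app, h₁]
  · rw [hf, hg]
    simp only [Functor.map_comp, GlobHom.comp_app, h₂]

structure ParallelLift (n : ℕ) (xp xm : (colim D).cells n) where
  j : J
  a : (D.obj j).cells n
  b : (D.obj j).cells n
  parallel : (D.obj j).Parallel n a b
  colimι_a : colimι D j n a = xp
  colimι_b : colimι D j n b = xm

theorem ParallelLift.nonempty {n : ℕ} {xp xm : (colim D).cells n}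
    (hp : (colim D).Parallel n xp xm) : Nonempty (ParallelLift D n xp xm) := by
  obtain ⟨j₁, a, rfl⟩ := colimι_surjective D xp
  obtain ⟨j₂, b, rfl⟩ := colimι_surjective D xm
  cases n with
  | zero =>
    exact ⟨⟨IsFiltered.max j₁ j₂, (D.map (IsFiltered.leftToMax j₁ j₂)).app 0 a,
      (D.map (IsFiltered.rightToMax j₁ j₂)).app 0 b, trivial,
      colimι_map D _ 0 a, colimι_map D _ 0 b⟩⟩
  | succ n =>
    have hs : colimι D j₁ n ((D.obj j₁).src n a) = colimι D j₂ n ((D.obj j₂).src n b) :=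
      by simpa [colim] using hp.1
    have ht : colimι D j₁ n ((D.obj j₁).tgt n a) = colimι D j₂ n ((D.obj j₂).tgt n b) :=
      by simpa [colim] using hp.2
    obtain ⟨l, f, g, hfs, hft⟩ := exists_map_eq_of_colimι_eq₂ D hs ht
    refine ⟨⟨l, (D.map f).app (n + 1) a, (D.map g).app (n + 1) b, ?_,
      colimι_map D f _ a, colimι_map D g _ b⟩⟩
    exact ⟨by rw [GlobHom.app_src, GlobHom.app_src, hfs],
      by rw [GlobHom.app_tgt, GlobHom.app_tgt, hft]⟩

end Filtered

end GlobSet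

def Coll.forget (T : Monad GlobSet) : Coll T ⥤ GlobSet where
  obj X := X.Q
  map f := f.hom

namespace Coll

variable {T : Monad GlobSet} {J : Type} [SmallCategory J] (D : J ⥤ Coll T)

def πCocone : Cocone (D ⋙ Coll.forget T) where
  pt := T.toFunctor.obj GlobSet.pt
  ι.app j := (D.obj j).π
  ι.naturality _ _ f := (D.map f).hom_π.trans (Category.comp_id _).symm

noncomputable def colim : Coll T where
  Q := GlobSet.colim (D ⋙ Coll.forget T)
  π := GlobSet.colimDescHom _ (πCocone D)

theorem colim_π_colimι (j : J) (n : ℕ) (x : (D.obj j).Q.cells n) :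
    (colim D).π.app n (GlobSet.colimι (D ⋙ Coll.forget T) j n x) = (D.obj j).π.app n x :=
  GlobSet.colimDesc_colimι (D ⋙ Coll.forget T) (πCocone D) j n x

noncomputable def colimCocone : Cocone D where
  pt := colim D
  ι.app j := ⟨(GlobSet.colimCocone (D ⋙ Coll.forget T)).ι.app j,
    GlobHom.hext fun n x => colim_π_colimι D j n x⟩
  ι.naturality _ _ f := CollHom.hext ((GlobSet.colimCocone (D ⋙ Coll.forget T)).ι.naturality f)

noncomputable def colimCoconeIsColimit : IsColimit (colimCocone D) where
  desc s := ⟨GlobSet.colimDescHom (D ⋙ Coll.forget T) ((Coll.forget T).mapCocone s),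
    GlobHom.hext fun n x => by
      obtain ⟨j, x, rfl⟩ := GlobSet.colimι_surjective _ x
      exact (congrArg (s.pt.π.app n) (GlobSet.colimDesc_colimι _ _ j n x)).trans
        ((GlobHom.congr_app (s.ι.app j).hom_π n x).trans (colim_π_colimι D j n x).symm)⟩
  fac s j := CollHom.hext ((GlobSet.colimCoconeIsColimit _).fac ((Coll.forget T).mapCocone s) j)
  uniq s m hm := CollHom.hext ((GlobSet.colimCoconeIsColimit _).uniq
    ((Coll.forget T).mapCocone s) m.hom fun j => congrArg CollHom.hom (hm j))

end Coll

/-! ### Filtered colimits of contracted collections -/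

namespace CColl

variable {T : Monad GlobSet} {J : Type} [SmallCategory J] [IsFiltered J] (K : J ⥤ CColl T)

abbrev globSetDiagram : J ⥤ GlobSet := (K ⋙ forgetCColl T) ⋙ Coll.forget T

/-- Computed at a stage where `xp` and `xm` have parallel representatives; by
`colimContraction_κ_colimι` the result does not depend on the chosen stage. -/
noncomputable def colimContraction : Contraction (Coll.colim (K ⋙ forgetCColl T)).π where
  κ n _ _ y hp hs ht :=
    let w := Classical.choice (GlobSet.ParallelLift.nonempty (globSetDiagram K) hp)
    GlobSet.colimι (globSetDiagram K) w.j (n + 1) ((K.obj w.j).contr.κ n w.a w.b y w.parallel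
      (hs.trans ((congrArg _ w.colimι_b.symm).trans (Coll.colim_π_colimι _ w.j n w.b)))
      (ht.trans ((congrArg _ w.colimι_a.symm).trans (Coll.colim_π_colimι _ w.j n w.a))))
  κ_src n _ _ _ hp _ _ :=
    (GlobSet.colimSrc_colimι _ _ _ _).trans
      ((congrArg (GlobSet.colimι _ _ n) ((K.obj _).contr.κ_src ..)).trans
        (Classical.choice (GlobSet.ParallelLift.nonempty (globSetDiagram K) hp)).colimι_b)
  κ_tgt n _ _ _ hp _ _ :=
    (GlobSet.colimTgt_colimι _ _ _ _).trans
      ((congrArg (GlobSet.colimι _ _ n) ((K.obj _).contr.κ_tgt ..)).trans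
        (Classical.choice (GlobSet.ParallelLift.nonempty (globSetDiagram K) hp)).colimι_a)
  κ_π _ _ _ _ _ _ _ := (Coll.colim_π_colimι _ _ _ _).trans ((K.obj _).contr.κ_π ..)

theorem colimContraction_κ_colimι {n : ℕ} (j : J) (a b : (K.obj j).Q.cells n)
    (y : (T.toFunctor.obj GlobSet.pt).cells (n + 1)) (hp hs ht hp' hs' ht') :
    (colimContraction K).κ n (GlobSet.colimι (globSetDiagram K) j n a)
        (GlobSet.colimι (globSetDiagram K) j n b) y hp hs ht
      = GlobSet.colimι (globSetDiagram K) j (n + 1) ((K.obj j).contr.κ n a b y hp' hs' ht') := by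
  let w := Classical.choice (GlobSet.ParallelLift.nonempty (globSetDiagram K) hp)
  obtain ⟨l, f, g, ha, hb⟩ :=
    GlobSet.exists_map_eq_of_colimι_eq₂ (globSetDiagram K) w.colimι_a w.colimι_b
  refine (GlobSet.colimι_map _ f (n + 1) _).symm.trans
    (Eq.trans ?_ (GlobSet.colimι_map _ g (n + 1) _))
  refine congrArg (GlobSet.colimι _ l (n + 1)) ((map_κ ..).trans (Eq.trans ?_ (map_κ ..).symm))
  exact Contraction.κ_congr _ ha hb y ..

noncomputable def colim : CColl T where
  toColl := Coll.colim (K ⋙ forgetCColl T)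
  contr := colimContraction K

noncomputable def colimCocone : Cocone K where
  pt := colim K
  ι.app j := homMk ((Coll.colimCocone (K ⋙ forgetCColl T)).ι.app j)
    fun _ a b y hp _ _ => (colimContraction_κ_colimι K j a b y _ _ _ hp _ _).symm
  ι.naturality _ _ f := (forgetCColl T).map_injective
    ((Coll.colimCocone (K ⋙ forgetCColl T)).ι.naturality f)

noncomputable def colimCoconeIsColimit : IsColimit (colimCocone K) :=
  IsColimit.ofFaithful (forgetCColl T) (Coll.colimCoconeIsColimit (K ⋙ forgetCColl T))
    (fun s => homMk ((Coll.colimCoconeIsColimit _).desc ((forgetCColl T).mapCocone s))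
      fun n _ _ y hp _ _ => by
        have desc_colimι := GlobSet.colimDesc_colimι (globSetDiagram K)
          ((Coll.forget T).mapCocone ((forgetCColl T).mapCocone s))
        let w := Classical.choice (GlobSet.ParallelLift.nonempty (globSetDiagram K) hp)
        refine (desc_colimι w.j (n + 1) _).trans ((map_κ ..).trans
          (Contraction.κ_congr _ ?_ ?_ y ..))
        · exact (desc_colimι w.j n w.a).symm.trans (congrArg _ w.colimι_a)
        · exact (desc_colimι w.j n w.b).symm.trans (congrArg _ w.colimι_b))
    fun _ => rfl

end CColl

theorem forgetCColl_finitary (T : Monad GlobSet) : Finitary (forgetCColl T) := fun _ _ _ =>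
  ⟨⟨fun {K} => preservesColimit_of_preserves_colimit_cocone (CColl.colimCoconeIsColimit K)
    (Coll.colimCoconeIsColimit (K ⋙ forgetCColl T))⟩⟩

/-- The forgetful functor `W` from the category `Q^{T̂*,κ}_•` of globular
contracted `T̂*`-collections over `•` to the category `Q^{T̂*}_•` of globular
`T̂*`-collections over `•` (where `T̂*` is the free strict involutive globular ω-category
monad), which forgets the contraction, is finitary, has a left adjoint, and the resulting
adjunction is monadic. -/
theorem forget_contraction_monadic (F : GlobSet ⥤ StarOmegaCat) (adj : F ⊣ forgetStar) :
    Finitary (forgetCColl adj.toMonad) ∧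
    (forgetCColl adj.toMonad).IsRightAdjoint ∧
    Nonempty (MonadicRightAdjoint (forgetCColl adj.toMonad)) :=
  ⟨forgetCColl_finitary adj.toMonad, (FreeContraction.adjunction adj.toMonad).isRightAdjoint,
    ⟨Monad.monadicOfHasPreservesGSplitCoequalizersOfReflectsIsomorphisms
      (FreeContraction.adjunction adj.toMonad)⟩⟩
end

section
/- The forgetful functor U* from the category Cf* of strict fully involutive globular ω-categories to the category Qf of globular ω-sets admits a left adjoint F*, the free strict involutive globular ω-category functor: for every globular ω-set Q there is a morphism of globular ω-sets η*_Q : Q → U*(F*(Q)) such that for every morphism of globular ω-sets φ : Q → U*(Ĉ) into the underlying globular ω-set of a strict fully involutive globular ω-category Ĉ there exists a unique involutive ω-functor φ̂ : F*(Q) → Ĉ with φ = U*(φ̂) ∘ η*_Q. -/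
open CategoryTheory CategoryTheory.Limits

/-!
The free object is the algebra of terms over `Q` in the operations (generators, sources, targets,
identities, compositions, involutions), read through all models at once: a term is interpreted in
every involutive ω-category `C` along every `φ : Q ⟶ U* C`, the `n`-cells are the `n`-terms all of
whose composites are defined in every interpretation, and two of them are identified when they
agree in every interpretation. The quantification over all models stays inside `Prop`, so there
is no size issue. The interpretations are jointly injective on cells, so every axiom of the free
object is inherited from the same axiom in the models, and interpretation along `φ` is the
required involutive ω-functor. It is unique because every cell is the class of a term, and an
involutive ω-functor extending `φ` must send a term to its interpretation.
-/

theorem CategoryTheory.Functor.exists_leftAdjoint_of_existsUnique_factorization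
    {C D : Type*} [Category C] [Category D] (G : D ⥤ C)
    (h : ∀ X, ∃ (Y : D) (η : X ⟶ G.obj Y),
      ∀ Z (f : X ⟶ G.obj Z), ∃! g : Y ⟶ Z, η ≫ G.map g = f) :
    ∃ (F : C ⥤ D) (η : ∀ X, X ⟶ G.obj (F.obj X)),
      ∀ X Z (f : X ⟶ G.obj Z), ∃! g : F.obj X ⟶ Z, η X ≫ G.map g = f := by
  have : ∀ X, HasInitial (StructuredArrow X G) := fun X => by
    choose Y η hη using h X
    choose g hg hg' using hη
    exact IsInitial.hasInitial (X := StructuredArrow.mk η) (IsInitial.ofUniqueHom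
      (fun A => StructuredArrow.homMk (g A.right A.hom) (hg _ _))
      (fun A m => StructuredArrow.ext _ _ (hg' _ _ _ (StructuredArrow.w m))))
  have := isRightAdjointOfStructuredArrowInitials G
  let adj := Adjunction.ofIsRightAdjoint G
  refine ⟨G.leftAdjoint, fun X => adj.unit.app X, fun X Z f => ?_⟩
  simpa only [adj.homEquiv_unit] using (adj.homEquiv X Z).bijective.existsUnique f

theorem StrictFunctor.app_comp_congr {C D : StrictOmegaCat} (F G : C ⟶ D) {p k : ℕ}
    {x' x : C.cells (p + (k + 1))} (h : C.srcIter (k + 1) x' = C.tgtIter (k + 1) x)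
    (hx' : F.toGlobHom.app _ x' = G.toGlobHom.app _ x')
    (hx : F.toGlobHom.app _ x = G.toGlobHom.app _ x) :
    F.toGlobHom.app _ (C.comp p k x' x h) = G.toGlobHom.app _ (C.comp p k x' x h) := by
  have hF :
      D.srcIter (k + 1) (F.toGlobHom.app _ x') = D.tgtIter (k + 1) (F.toGlobHom.app _ x) := by
    rw [← GlobHom.app_srcIter, ← GlobHom.app_tgtIter, h]
  rw [F.map_comp p k x' x h hF, G.map_comp p k x' x h (hx' ▸ hx ▸ hF)]
  simp only [hx', hx]

namespace FreeStarOmegaCat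

variable (Q : GlobSet)

inductive Term : ℕ → Type
  | gen (n : ℕ) : Q.cells n → Term n
  | src (n : ℕ) : Term (n + 1) → Term n
  | tgt (n : ℕ) : Term (n + 1) → Term n
  | id (n : ℕ) : Term n → Term (n + 1)
  | comp (p k : ℕ) : Term (p + (k + 1)) → Term (p + (k + 1)) → Term (p + (k + 1))
  | inv (q n : ℕ) : Term n → Term n

variable {Q} (C : StarOmegaCat) (φ : Q ⟶ forgetStar.obj C)

open scoped Classical in
/-- The value of a non-composable composite is junk; it is never used on `Defined` terms. -/
noncomputable def Term.eval : ∀ {n}, Term Q n → C.cells n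
  | _, .gen n x => φ.app n x
  | _, .src n t => C.src n t.eval
  | _, .tgt n t => C.tgt n t.eval
  | _, .id n t => C.id' n t.eval
  | _, .comp p k t' t =>
      if h : C.srcIter (k + 1) t'.eval = C.tgtIter (k + 1) t.eval then C.comp p k _ _ h
      else t.eval
  | _, .inv q n t => C.inv q n t.eval

def Term.Defined : ∀ {n}, Term Q n → Prop
  | _, .gen _ _ => True
  | _, .src _ t | _, .tgt _ t | _, .id _ t | _, .inv _ _ t => t.Defined
  | _, .comp _ k t' t =>
      t'.Defined ∧ t.Defined ∧ C.srcIter (k + 1) (t'.eval C φ) = C.tgtIter (k + 1) (t.eval C φ)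

theorem Term.eval_comp {p k : ℕ} {t' t : Term Q (p + (k + 1))}
    (h : C.srcIter (k + 1) (t'.eval C φ) = C.tgtIter (k + 1) (t.eval C φ)) :
    (Term.comp p k t' t).eval C φ = C.comp p k _ _ h :=
  dif_pos h

variable (Q) in
def Cell (n : ℕ) : Type :=
  Quot fun a b : {t : Term Q n // ∀ C φ, t.Defined C φ} => ∀ C φ, a.1.eval C φ = b.1.eval C φ

namespace Cell

def mk {n : ℕ} (t : Term Q n) (ht : ∀ C φ, t.Defined C φ) : Cell Q n := Quot.mk _ ⟨t, ht⟩

noncomputable def eval {n : ℕ} : Cell Q n → C.cells n :=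
  Quot.lift (fun a => a.1.eval C φ) fun _ _ h => h C φ

@[simp] theorem eval_mk {n : ℕ} (t : Term Q n) (ht : ∀ C φ, t.Defined C φ) :
    (mk t ht).eval C φ = t.eval C φ :=
  rfl

theorem ext_eval {n : ℕ} {x y : Cell Q n}
    (h : ∀ (C : StarOmegaCat) (φ : Q ⟶ forgetStar.obj C), x.eval C φ = y.eval C φ) : x = y := by
  induction x using Quot.ind
  induction y using Quot.ind
  exact Quot.sound h

def src {n : ℕ} : Cell Q (n + 1) → Cell Q n :=
  Quot.map (fun a => ⟨.src n a.1, a.2⟩) fun _ _ h C φ => congrArg (C.src n) (h C φ)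

def tgt {n : ℕ} : Cell Q (n + 1) → Cell Q n :=
  Quot.map (fun a => ⟨.tgt n a.1, a.2⟩) fun _ _ h C φ => congrArg (C.tgt n) (h C φ)

def id {n : ℕ} : Cell Q n → Cell Q (n + 1) :=
  Quot.map (fun a => ⟨.id n a.1, a.2⟩) fun _ _ h C φ => congrArg (C.id' n) (h C φ)

def inv (q : ℕ) {n : ℕ} : Cell Q n → Cell Q n :=
  Quot.map (fun a => ⟨.inv q n a.1, a.2⟩) fun _ _ h C φ => congrArg (C.inv q n) (h C φ)

@[simp] theorem eval_src {n : ℕ} (x : Cell Q (n + 1)) :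
    (src x).eval C φ = C.src n (x.eval C φ) := by
  induction x using Quot.ind; rfl

@[simp] theorem eval_tgt {n : ℕ} (x : Cell Q (n + 1)) :
    (tgt x).eval C φ = C.tgt n (x.eval C φ) := by
  induction x using Quot.ind; rfl

@[simp] theorem eval_id {n : ℕ} (x : Cell Q n) :
    (id x).eval C φ = C.id' n (x.eval C φ) := by
  induction x using Quot.ind; rfl

@[simp] theorem eval_inv (q : ℕ) {n : ℕ} (x : Cell Q n) :
    (inv q x).eval C φ = C.inv q n (x.eval C φ) := by
  induction x using Quot.ind; rfl

theorem eval_out {n : ℕ} (x : Cell Q n) : x.out.1.eval C φ = x.eval C φ := by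
  conv_rhs => rw [← Quot.out_eq x]
  rfl

end Cell

variable (Q) in
abbrev globSet : GlobSet where
  cells := Cell Q
  src _ := Cell.src
  tgt _ := Cell.tgt
  glob_ss n _ := Cell.ext_eval fun C φ => by simpa using C.glob_ss n _
  glob_tt n _ := Cell.ext_eval fun C φ => by simpa using C.glob_tt n _

noncomputable def evalHom : globSet Q ⟶ C.toGlobSet where
  app _ := Cell.eval C φ
  app_src _ x := (Cell.eval_src C φ x).symm
  app_tgt _ x := (Cell.eval_tgt C φ x).symm

@[simp] theorem Cell.eval_srcIter (k : ℕ) {n : ℕ} (x : Cell Q (n + k)) :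
    ((globSet Q).srcIter k x).eval C φ = C.srcIter k (x.eval C φ) :=
  (evalHom C φ).app_srcIter k x

@[simp] theorem Cell.eval_tgtIter (k : ℕ) {n : ℕ} (x : Cell Q (n + k)) :
    ((globSet Q).tgtIter k x).eval C φ = C.tgtIter k (x.eval C φ) :=
  (evalHom C φ).app_tgtIter k x

@[simp] theorem Cell.eval_iterId (k : ℕ) {n : ℕ} (x : Cell Q n) :
    (iterId (Cell Q) (fun _ => Cell.id) k x).eval C φ = iterId C.cells C.id' k (x.eval C φ) := by
  induction k with
  | zero => rfl
  | succ k ih => exact (Cell.eval_id C φ _).trans (congrArg _ ih)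

@[simp] theorem Cell.eval_castCell {m m' : ℕ} (he : m = m') (x : Cell Q m) :
    ((globSet Q).castCell he x).eval C φ = C.castCell he (x.eval C φ) := by
  subst he; rfl

theorem Cell.eval_composable {p k : ℕ} {x' x : Cell Q (p + (k + 1))}
    (h : (globSet Q).srcIter (k + 1) x' = (globSet Q).tgtIter (k + 1) x) :
    C.srcIter (k + 1) (x'.eval C φ) = C.tgtIter (k + 1) (x.eval C φ) := by
  simpa using congrArg (Cell.eval C φ) h

noncomputable def Cell.comp (p k : ℕ) (x' x : Cell Q (p + (k + 1)))
    (h : (globSet Q).srcIter (k + 1) x' = (globSet Q).tgtIter (k + 1) x) : Cell Q (p + (k + 1)) :=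
  mk (.comp p k x'.out.1 x.out.1) fun C φ =>
    ⟨x'.out.2 C φ, x.out.2 C φ, by simpa only [eval_out] using eval_composable C φ h⟩

@[simp] theorem Cell.eval_comp {p k : ℕ} (x' x : Cell Q (p + (k + 1)))
    (h : (globSet Q).srcIter (k + 1) x' = (globSet Q).tgtIter (k + 1) x) :
    (Cell.comp p k x' x h).eval C φ = C.comp p k _ _ (eval_composable C φ h) := by
  refine (Term.eval_comp C φ ?_).trans ?_
  · simpa only [eval_out] using eval_composable C φ h
  · simp only [eval_out]

variable (Q) in
noncomputable def obj : StarOmegaCat where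
  toGlobSet := globSet Q
  id' _ := Cell.id
  id_src _ _ := Cell.ext_eval fun C φ => by simp [C.id_src]
  id_tgt _ _ := Cell.ext_eval fun C φ => by simp [C.id_tgt]
  comp := Cell.comp
  comp_src_zero _ _ _ _ := Cell.ext_eval fun C φ => by simp [C.comp_src_zero]
  comp_tgt_zero _ _ _ _ := Cell.ext_eval fun C φ => by simp [C.comp_tgt_zero]
  comp_src_succ p k _ _ _ _ := Cell.ext_eval fun C φ => by
    simp only [Cell.eval_src, Cell.eval_comp]; exact C.comp_src_succ p k _ _ _ _
  comp_tgt_succ p k _ _ _ _ := Cell.ext_eval fun C φ => by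
    simp only [Cell.eval_tgt, Cell.eval_comp]; exact C.comp_tgt_succ p k _ _ _ _
  comp_assoc p k _ _ _ _ _ _ _ := Cell.ext_eval fun C φ => by
    simp only [Cell.eval_comp]; exact C.comp_assoc p k _ _ _ _ _ _ _
  comp_unit_left p k _ _ := Cell.ext_eval fun C φ => by
    simp only [Cell.eval_comp, Cell.eval_iterId, Cell.eval_tgtIter]
    exact C.comp_unit_left p k _ _
  comp_unit_right p k _ _ := Cell.ext_eval fun C φ => by
    simp only [Cell.eval_comp, Cell.eval_iterId, Cell.eval_srcIter]
    exact C.comp_unit_right p k _ _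
  id_comp' p k _ _ _ _ := Cell.ext_eval fun C φ => by
    simp only [Cell.eval_comp, Cell.eval_id]; exact C.id_comp' p k _ _ _ _
  exchange q d k j he _ _ _ _ _ _ _ _ _ _ := Cell.ext_eval fun C φ => by
    simp only [Cell.eval_comp, Cell.eval_castCell]
    exact C.exchange q d k j he _ _ _ _ _ _ _ _ _ _
  inv q _ := Cell.inv q
  inv_src_self _ _ := Cell.ext_eval fun C φ => by simp [C.inv_src_self]
  inv_tgt_self _ _ := Cell.ext_eval fun C φ => by simp [C.inv_tgt_self]
  inv_src_ne q p hpq _ := Cell.ext_eval fun C φ => by simp [C.inv_src_ne q p hpq]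
  inv_tgt_ne q p hpq _ := Cell.ext_eval fun C φ => by simp [C.inv_tgt_ne q p hpq]
  inv_comp_self p k _ _ _ _ := Cell.ext_eval fun C φ => by
    simp only [Cell.eval_comp, Cell.eval_inv]; exact C.inv_comp_self p k _ _ _ _
  inv_comp_ne q p k hqp _ _ _ _ := Cell.ext_eval fun C φ => by
    simp only [Cell.eval_comp, Cell.eval_inv]; exact C.inv_comp_ne q p k hqp _ _ _ _
  inv_id _ _ _ := Cell.ext_eval fun C φ => by simp [C.inv_id]
  inv_inv _ _ _ := Cell.ext_eval fun C φ => by simp [C.inv_inv]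
  inv_comm q p _ _ := Cell.ext_eval fun C φ => by simp [C.inv_comm q p]
  inv_ground q n hnq _ := Cell.ext_eval fun C φ => by simp [C.inv_ground q n hnq]

variable (Q) in
def unit : Q ⟶ forgetStar.obj (obj Q) where
  app n x := Cell.mk (.gen n x) fun _ _ => trivial
  app_src n x := Cell.ext_eval fun _ φ => φ.app_src n x
  app_tgt n x := Cell.ext_eval fun _ φ => φ.app_tgt n x

noncomputable def lift : obj Q ⟶ C where
  toF :=
    { toGlobHom := evalHom C φ
      map_id := fun _ => Cell.eval_id C φ
      map_comp := fun _ _ x' x h _ => Cell.eval_comp C φ x' x h }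
  map_inv q _ := Cell.eval_inv C φ q

theorem unit_comp_lift : unit Q ≫ forgetStar.map (lift C φ) = φ :=
  GlobHom.hext fun _ _ => rfl

theorem Cell.mk_comp {p k : ℕ} {t' t : Term Q (p + (k + 1))}
    (ht : ∀ C φ, (Term.comp p k t' t).Defined C φ) :
    ∃ h, mk (.comp p k t' t) ht
      = Cell.comp p k (mk t' fun C φ => (ht C φ).1) (mk t fun C φ => (ht C φ).2.1) h := by
  refine ⟨Cell.ext_eval fun C φ => ?_, Cell.ext_eval fun C φ => ?_⟩
  · simpa using (ht C φ).2.2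
  · rw [Cell.eval_comp]
    exact Term.eval_comp C φ (ht C φ).2.2

theorem lift_unique (ψ : obj Q ⟶ C) (hψ : unit Q ≫ forgetStar.map ψ = φ) : ψ = lift C φ := by
  suffices key : ∀ {n} (t : Term Q n) ht,
      ψ.toF.toGlobHom.app n (Cell.mk t ht) = (lift C φ).toF.toGlobHom.app n (Cell.mk t ht) by
    refine StarFunctor.hext (StrictFunctor.hext (GlobHom.hext fun n x => ?_))
    obtain ⟨⟨t, ht⟩, rfl⟩ := Quot.exists_rep x
    exact key t ht
  intro n t ht
  induction t with
  | gen n x => exact GlobHom.congr_app hψ n x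
  | src n t ih => exact (ψ.toF.toGlobHom.app_src n _).symm.trans (congrArg _ (ih ht))
  | tgt n t ih => exact (ψ.toF.toGlobHom.app_tgt n _).symm.trans (congrArg _ (ih ht))
  | id n t ih => exact (ψ.toF.map_id n _).trans (congrArg _ (ih ht))
  | inv q n t ih => exact (ψ.map_inv q n _).trans (congrArg _ (ih ht))
  | comp p k t' t ih' ih =>
    obtain ⟨h, hmk⟩ := Cell.mk_comp ht
    rw [hmk]
    exact StrictFunctor.app_comp_congr ψ.toF (lift C φ).toF h (ih' _) (ih _)

end FreeStarOmegaCat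

/-- The forgetful functor `U* : Cf* ⥤ Qf` from strict fully involutive
globular ω-categories to globular ω-sets admits a left adjoint `F*`, the free strict
involutive globular ω-category functor: for every globular ω-set `Q` there is a morphism
of globular ω-sets `η*_Q : Q ⟶ U*(F*(Q))` such that for every morphism of globular
ω-sets `φ : Q ⟶ U*(Ĉ)` into the underlying globular ω-set of a strict fully involutive
globular ω-category `Ĉ` there exists a unique involutive ω-functor `φ̂ : F*(Q) ⟶ Ĉ`
with `φ = U*(φ̂) ∘ η*_Q`. -/
theorem free_involutive_strict_omega_category :
    ∃ (F : GlobSet ⥤ StarOmegaCat) (η : ∀ Q : GlobSet, Q ⟶ forgetStar.obj (F.obj Q)),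
      ∀ (Q : GlobSet) (C : StarOmegaCat) (φ : Q ⟶ forgetStar.obj C),
        ∃! φhat : F.obj Q ⟶ C, η Q ≫ forgetStar.map φhat = φ :=
  forgetStar.exists_leftAdjoint_of_existsUnique_factorization fun Q =>
    ⟨FreeStarOmegaCat.obj Q, FreeStarOmegaCat.unit Q, fun C φ =>
      ⟨FreeStarOmegaCat.lift C φ, FreeStarOmegaCat.unit_comp_lift C φ,
        fun ψ hψ => FreeStarOmegaCat.lift_unique C φ ψ hψ⟩⟩
end
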